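/- arXiv:1010.2361 — 9 statements merged into one kernel-verified Lean document; each statement's English description precedes it below -/
import Mathlib

section
/- Let d, M ≥ 1, let ψ₁, …, ψ_M be vectors in ℂ^d (not necessarily of unit norm) such that the matrix I − Σ_{j=1}^M ψ_j ψ_j† is positive semidefinite, let n₁, …, n_M be natural numbers with N := Σ_j n_j > 0, and set f_j := n_j / N. Then for every unit vector φ ∈ ℂ^d one has ∏_{j=1}^M |⟨φ, ψ_j⟩|^{2 n_j} ≤ ∏_{j=1}^M f_j^{n_j}. -/
open scoped BigOperators ComplexOrder

/-! Positivity of `1 - ∑ ψⱼψⱼ†` at `φ` says `∑ⱼ aⱼ ≤ ⟨φ, φ⟩ = 1` for `aⱼ = |⟨φ, ψⱼ⟩|²`. With the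
weights `fⱼ = nⱼ / N`, which sum to `1`, weighted AM–GM gives
`∏ aⱼ ^ fⱼ = ∏ fⱼ ^ fⱼ · ∏ (aⱼ / fⱼ) ^ fⱼ ≤ ∏ fⱼ ^ fⱼ · ∑ aⱼ ≤ ∏ fⱼ ^ fⱼ`,
and raising both sides to the power `N` gives the claim. -/

/-- The standard Hermitian inner product on `ℂ^d`, conjugate-linear in the
first argument: `⟨φ, ψ⟩ = ∑ i, conj (φ i) * ψ i`. -/
noncomputable def inp {d : ℕ} (φ ψ : Fin d → ℂ) : ℂ :=
  ∑ i, (starRingEnd ℂ) (φ i) * ψ i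

open Matrix

theorem Matrix.dotProduct_vecMulVec_star_mulVec {m : Type*} [Fintype m] (φ ψ : m → ℂ) :
    star φ ⬝ᵥ (vecMulVec ψ (star ψ) *ᵥ φ) = Complex.normSq (star φ ⬝ᵥ ψ) := by
  rw [vecMulVec_mulVec, op_smul_eq_smul, dotProduct_smul, star_dotProduct, smul_eq_mul,
    Complex.normSq_eq_conj_mul_self]
  rfl

theorem Matrix.sum_normSq_dotProduct_le {m ι : Type*} [Fintype m] [Fintype ι] [DecidableEq m]
    (ψ : ι → m → ℂ) (h : (1 - ∑ j, vecMulVec (ψ j) (star (ψ j))).PosSemidef) (φ : m → ℂ) :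
    ∑ j, (Complex.normSq (star φ ⬝ᵥ ψ j) : ℂ) ≤ star φ ⬝ᵥ φ := by
  have := h.dotProduct_mulVec_nonneg φ
  rwa [sub_mulVec, one_mulVec, dotProduct_sub, sum_mulVec, dotProduct_sum, sub_nonneg,
    Finset.sum_congr rfl fun j _ => dotProduct_vecMulVec_star_mulVec φ (ψ j)] at this

namespace Real

variable {ι : Type*} (s : Finset ι)

theorem prod_rpow_le_prod_rpow_self {w a : ι → ℝ} (hw : ∀ i ∈ s, 0 ≤ w i)
    (hw₁ : ∑ i ∈ s, w i = 1) (ha : ∀ i ∈ s, 0 ≤ a i) (ha₁ : ∑ i ∈ s, a i ≤ 1) :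
    ∏ i ∈ s, a i ^ w i ≤ ∏ i ∈ s, w i ^ w i := by
  have hsplit : ∀ i ∈ s, a i ^ w i = (a i / w i) ^ w i * w i ^ w i := by
    intro i hi
    -- for `w i = 0` both sides are `1`, whatever the junk value `a i / 0`
    rcases (hw i hi).eq_or_lt with h | h
    · simp [← h]
    · rw [← mul_rpow (div_nonneg (ha i hi) h.le) h.le, div_mul_cancel₀ _ h.ne']
  have hmean : ∏ i ∈ s, (a i / w i) ^ w i ≤ 1 := calc
    _ ≤ ∑ i ∈ s, w i * (a i / w i) :=
      geom_mean_le_arith_mean_weighted s w _ hw hw₁ fun i hi => div_nonneg (ha i hi) (hw i hi)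
    _ ≤ ∑ i ∈ s, a i := Finset.sum_le_sum fun i hi => by
      rcases (hw i hi).eq_or_lt with h | h
      · simpa [← h] using ha i hi
      · rw [mul_div_cancel₀ _ h.ne']
    _ ≤ 1 := ha₁
  rw [Finset.prod_congr rfl hsplit, Finset.prod_mul_distrib]
  exact mul_le_of_le_one_left (Finset.prod_nonneg fun i hi => rpow_nonneg (hw i hi) _) hmean

theorem prod_pow_le_prod_div_pow {n : ι → ℕ} (hn : 0 < ∑ i ∈ s, n i) {a : ι → ℝ}
    (ha : ∀ i ∈ s, 0 ≤ a i) (ha₁ : ∑ i ∈ s, a i ≤ 1) :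
    ∏ i ∈ s, a i ^ n i ≤ ∏ i ∈ s, ((n i : ℝ) / ∑ i ∈ s, n i) ^ n i := by
  set N := ∑ i ∈ s, n i
  have hN : (0 : ℝ) < N := by exact_mod_cast hn
  have hw : ∀ i ∈ s, 0 ≤ (n i : ℝ) / N := fun i _ => by positivity
  have hw₁ : ∑ i ∈ s, (n i : ℝ) / N = 1 := by
    rw [← Finset.sum_div, ← Nat.cast_sum, div_self hN.ne']
  have hpow : ∀ x : ℝ, 0 ≤ x → ∀ i, x ^ n i = (x ^ ((n i : ℝ) / N)) ^ N := fun x hx i => by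
    rw [← rpow_mul_natCast hx, div_mul_cancel₀ _ hN.ne', rpow_natCast]
  rw [Finset.prod_congr rfl fun i hi => hpow _ (ha i hi) i,
    Finset.prod_congr rfl fun i hi => hpow _ (hw i hi) i, Finset.prod_pow, Finset.prod_pow]
  exact pow_le_pow_left₀ (Finset.prod_nonneg fun i hi => rpow_nonneg (ha i hi) _)
    (prod_rpow_le_prod_rpow_self s hw hw₁ ha ha₁) N

end Real

theorem stmt0_general (d M : ℕ)
    (ψ : Fin M → (Fin d → ℂ))
    (hPOVM : Matrix.PosSemidef
      ((1 : Matrix (Fin d) (Fin d) ℂ) - ∑ j, Matrix.vecMulVec (ψ j) (star (ψ j))))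
    (n : Fin M → ℕ) (N : ℕ) (hN : N = ∑ j, n j) (hNpos : 0 < N)
    (f : Fin M → ℝ) (hf : ∀ j, f j = (n j : ℝ) / N)
    (φ : Fin d → ℂ) (hφ : inp φ φ = 1) :
    ∏ j, ‖inp φ (ψ j)‖ ^ (2 * n j) ≤ ∏ j, (f j) ^ (n j) := by
  have hsum : ∑ j, ‖inp φ (ψ j)‖ ^ 2 ≤ 1 := by
    have h := sum_normSq_dotProduct_le ψ hPOVM φ
    rw [show star φ ⬝ᵥ φ = 1 from hφ] at h
    simp only [Complex.sq_norm]
    exact_mod_cast h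
  subst hN
  simp only [pow_mul, hf]
  exact Real.prod_pow_le_prod_div_pow _ hNpos (fun j _ => sq_nonneg _) hsum

theorem stmt0 (d M : ℕ) (hd : 1 ≤ d) (hM : 1 ≤ M)
    (ψ : Fin M → (Fin d → ℂ))
    (hPOVM : Matrix.PosSemidef
      ((1 : Matrix (Fin d) (Fin d) ℂ) - ∑ j, Matrix.vecMulVec (ψ j) (star (ψ j))))
    (n : Fin M → ℕ) (N : ℕ) (hN : N = ∑ j, n j) (hNpos : 0 < N)
    (f : Fin M → ℝ) (hf : ∀ j, f j = (n j : ℝ) / N)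
    (φ : Fin d → ℂ) (hφ : inp φ φ = 1) :
    ∏ j, ‖inp φ (ψ j)‖ ^ (2 * n j) ≤ ∏ j, (f j) ^ (n j) :=
  stmt0_general d M ψ hPOVM n N hN hNpos f hf φ hφ
end

section
/- Let d, M ≥ 1, let ψ₁, …, ψ_M be vectors in ℂ^d (not necessarily of unit norm) such that the matrix I − Σ_{j=1}^M ψ_j ψ_j† is positive semidefinite, let n₁, …, n_M be natural numbers with N := Σ_j n_j > 0, and set f_j := n_j / N. Then for every density matrix ρ on ℂ^d one has ∏_{j=1}^M (ψ_j† ρ ψ_j)^{n_j} ≤ ∏_{j=1}^M f_j^{n_j} (note each ψ_j† ρ ψ_j is a nonnegative real number). -/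
/-!
The numbers `pⱼ = ψⱼ†ρψⱼ` are nonnegative, and `∑ pⱼ = tr(ρ ∑ ψⱼψⱼ†) ≤ tr ρ = 1` because the
trace of a product of two positive semidefinite matrices is nonnegative. Weighted AM–GM with
weights `fⱼ` applied to `pⱼ / fⱼ` gives `∏ (pⱼ / fⱼ)^fⱼ ≤ ∑ pⱼ ≤ 1`, i.e. `∏ pⱼ^fⱼ ≤ ∏ fⱼ^fⱼ`,
and raising this to the power `N` gives the claim.
-/

open scoped BigOperators ComplexOrder

namespace Matrix

variable {𝕜 n ι : Type*} [RCLike 𝕜] [Fintype n]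

lemma PosSemidef.trace_mul_nonneg {A B : Matrix n n 𝕜} (hA : A.PosSemidef)
    (hB : B.PosSemidef) : 0 ≤ (A * B).trace := by
  classical
  obtain ⟨R, rfl⟩ : ∃ R : Matrix n n 𝕜, A = star R * R := by
    open scoped MatrixOrder in exact CStarAlgebra.nonneg_iff_eq_star_mul_self.mp hA.nonneg
  rw [mul_assoc, trace_mul_comm]
  exact (hB.mul_mul_conjTranspose_same R).trace_nonneg

lemma trace_mul_vecMulVec_star (A : Matrix n n 𝕜) (x : n → 𝕜) :
    (A * vecMulVec x (star x)).trace = star x ⬝ᵥ A *ᵥ x := by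
  rw [mul_vecMulVec, trace_vecMulVec, dotProduct_comm]

lemma PosSemidef.sum_re_dotProduct_mulVec_le_one [DecidableEq n] [Fintype ι] {ρ : Matrix n n 𝕜}
    (hρ : ρ.PosSemidef) (hρtr : ρ.trace = 1) {ψ : ι → n → 𝕜}
    (hψ : (1 - ∑ j, vecMulVec (ψ j) (star (ψ j))).PosSemidef) :
    ∑ j, RCLike.re (star (ψ j) ⬝ᵥ ρ *ᵥ ψ j) ≤ 1 := by
  have h := hρ.trace_mul_nonneg hψ
  rw [Matrix.mul_sub, Matrix.mul_one, Matrix.mul_sum, trace_sub, trace_sum, hρtr] at h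
  simp only [trace_mul_vecMulVec_star] at h
  have := (RCLike.nonneg_iff.mp h).1
  rw [map_sub, RCLike.one_re, map_sum] at this
  linarith

end Matrix

section

variable {ι : Type*} [Fintype ι]

lemma Real.prod_rpow_le_prod_rpow_self_s1 {p w : ι → ℝ} (hp : ∀ i, 0 ≤ p i)
    (hp1 : ∑ i, p i ≤ 1) (hw : ∀ i, 0 ≤ w i) (hw1 : ∑ i, w i = 1) :
    ∏ i, p i ^ w i ≤ ∏ i, w i ^ w i := by
  -- `p i / w i` is junk where `w i = 0`, but there it carries exponent `0`.
  set z : ι → ℝ := fun i => p i / w i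
  have hsplit : ∀ i, p i ^ w i = w i ^ w i * z i ^ w i := fun i => by
    rcases (hw i).eq_or_lt with h | h
    · simp [← h]
    · rw [← Real.mul_rpow (hw i) (div_nonneg (hp i) (hw i)), mul_div_cancel₀ _ h.ne']
  have hwz : ∀ i, w i * z i ≤ p i := fun i => by
    rcases (hw i).eq_or_lt with h | h
    · simp [← h, hp i]
    · exact (mul_div_cancel₀ _ h.ne').le
  have hamgm : ∏ i, z i ^ w i ≤ 1 :=
    calc ∏ i, z i ^ w i ≤ ∑ i, w i * z i :=
          Real.geom_mean_le_arith_mean_weighted _ _ _ (fun i _ => hw i) hw1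
            (fun i _ => div_nonneg (hp i) (hw i))
      _ ≤ ∑ i, p i := Finset.sum_le_sum fun i _ => hwz i
      _ ≤ 1 := hp1
  calc ∏ i, p i ^ w i = (∏ i, w i ^ w i) * ∏ i, z i ^ w i := by
        simp only [hsplit, Finset.prod_mul_distrib]
    _ ≤ ∏ i, w i ^ w i :=
        mul_le_of_le_one_right (Finset.prod_nonneg fun i _ => Real.rpow_nonneg (hw i) _) hamgm

lemma prod_pow_le_prod_div_sum_pow {p : ι → ℝ} (hp : ∀ i, 0 ≤ p i) (hp1 : ∑ i, p i ≤ 1)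
    (n : ι → ℕ) : ∏ i, p i ^ n i ≤ ∏ i, ((n i : ℝ) / ∑ j, (n j : ℝ)) ^ n i := by
  set N : ℝ := ∑ j, (n j : ℝ)
  rcases (show 0 ≤ N by positivity).eq_or_lt with hN | hN
  · have hn : ∀ i, n i = 0 := by
      simpa [N, ← Nat.cast_sum, Finset.sum_eq_zero_iff] using hN.symm
    simp [hn]
  set w : ι → ℝ := fun i => (n i : ℝ) / N
  have hw : ∀ i, 0 ≤ w i := fun i => by positivity
  have hpow : ∀ x : ι → ℝ, (∀ i, 0 ≤ x i) → (∏ i, x i ^ w i) ^ N = ∏ i, x i ^ n i :=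
    fun x hx => by
      rw [← Real.finsetProd_rpow _ _ fun i _ => Real.rpow_nonneg (hx i) _]
      refine Finset.prod_congr rfl fun i _ => ?_
      rw [← Real.rpow_mul (hx i), div_mul_cancel₀ _ hN.ne', Real.rpow_natCast]
  rw [← hpow p hp, ← hpow w hw]
  have hw1 : ∑ i, w i = 1 := by rw [← Finset.sum_div, div_self hN.ne']
  exact Real.rpow_le_rpow (Finset.prod_nonneg fun i _ => Real.rpow_nonneg (hp i) _)
    (Real.prod_rpow_le_prod_rpow_self_s1 hp hp1 hw hw1) hN.le

end

theorem stmt1_general (d M : ℕ)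
    (ψ : Fin M → (Fin d → ℂ))
    (hPOVM : Matrix.PosSemidef
      ((1 : Matrix (Fin d) (Fin d) ℂ) - ∑ j, Matrix.vecMulVec (ψ j) (star (ψ j))))
    (n : Fin M → ℕ) (N : ℕ) (hN : N = ∑ j, n j)
    (f : Fin M → ℝ) (hf : ∀ j, f j = (n j : ℝ) / N)
    (ρ : Matrix (Fin d) (Fin d) ℂ) (hρ : ρ.PosSemidef) (hρtr : ρ.trace = 1) :
    ∏ j, (dotProduct (star (ψ j)) (ρ.mulVec (ψ j))).re ^ (n j)
      ≤ ∏ j, (f j) ^ (n j) := by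
  obtain rfl : f = fun j => (n j : ℝ) / ∑ i, (n i : ℝ) :=
    funext fun j => by rw [hf, hN, Nat.cast_sum]
  exact prod_pow_le_prod_div_sum_pow (fun j => hρ.re_dotProduct_nonneg (ψ j))
    (hρ.sum_re_dotProduct_mulVec_le_one hρtr hPOVM) n

theorem stmt1 (d M : ℕ) (hd : 1 ≤ d) (hM : 1 ≤ M)
    (ψ : Fin M → (Fin d → ℂ))
    (hPOVM : Matrix.PosSemidef
      ((1 : Matrix (Fin d) (Fin d) ℂ) - ∑ j, Matrix.vecMulVec (ψ j) (star (ψ j))))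
    (n : Fin M → ℕ) (N : ℕ) (hN : N = ∑ j, n j) (hNpos : 0 < N)
    (f : Fin M → ℝ) (hf : ∀ j, f j = (n j : ℝ) / N)
    (ρ : Matrix (Fin d) (Fin d) ℂ) (hρ : ρ.PosSemidef) (hρtr : ρ.trace = 1) :
    ∏ j, (dotProduct (star (ψ j)) (ρ.mulVec (ψ j))).re ^ (n j)
      ≤ ∏ j, (f j) ^ (n j) :=
  stmt1_general d M ψ hPOVM n N hN f hf ρ hρ hρtr
end

section
/- Let d, M ≥ 1, let ψ₁, …, ψ_M be vectors in ℂ^d (not necessarily of unit norm) such that the matrix I − Σ_{j=1}^M ψ_j ψ_j† is positive semidefinite, let n₁, …, n_M be natural numbers with N := Σ_j n_j > 0, and set f_j := n_j / N. Then there exists a unit vector φ ∈ ℂ^d with ∏_{j=1}^M |⟨φ, ψ_j⟩|^{2 n_j} = ∏_{j=1}^M f_j^{n_j} if and only if there exists a unit vector φ_s ∈ ℂ^d with |⟨φ_s, ψ_j⟩|² = f_j for all j = 1, …, M. -/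
open scoped BigOperators ComplexOrder

/-! For a unit vector `φ` the numbers `p j = ‖⟨φ, ψ j⟩‖ ^ 2` satisfy `∑ p j ≤ 1`, since
`⟨φ, (1 - ∑ ψ j ψ jᴴ) φ⟩ ≥ 0`. Under that constraint Gibbs' inequality
`∑ n j * log (N p j / n j) ≤ ∑ (N p j - n j) ≤ 0`, whose termwise equality case is
`N p j = n j`, shows that `∏ p j ^ n j ≤ ∏ f j ^ n j` with equality only at `p = f`. -/

open Finset Matrix

theorem inp_eq_star_dotProduct {d : ℕ} (φ ψ : Fin d → ℂ) : inp φ ψ = star φ ⬝ᵥ ψ := rfl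

theorem star_dotProduct_one_sub_sum_vecMulVec_mulVec {d M : ℕ} (ψ : Fin M → Fin d → ℂ)
    (φ : Fin d → ℂ) :
    star φ ⬝ᵥ ((1 - ∑ j, vecMulVec (ψ j) (star (ψ j))) *ᵥ φ) =
      inp φ φ - ∑ j, ((‖inp φ (ψ j)‖ ^ 2 : ℝ) : ℂ) := by
  simp only [sub_mulVec, one_mulVec, dotProduct_sub, sum_mulVec, dotProduct_sum,
    vecMulVec_mulVec, dotProduct_smul, star_dotProduct (ψ _), ← inp_eq_star_dotProduct,
    op_smul_eq_mul, RCLike.star_def, Complex.mul_conj', Complex.ofReal_pow]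

theorem sum_norm_inp_sq_le_one {d M : ℕ} {ψ : Fin M → Fin d → ℂ}
    (hψ : (1 - ∑ j, vecMulVec (ψ j) (star (ψ j))).PosSemidef)
    {φ : Fin d → ℂ} (hφ : inp φ φ = 1) :
    ∑ j, ‖inp φ (ψ j)‖ ^ 2 ≤ 1 := by
  have h := hψ.dotProduct_mulVec_nonneg φ
  rw [star_dotProduct_one_sub_sum_vecMulVec_mulVec, hφ, ← Complex.ofReal_sum,
    ← Complex.ofReal_one, ← Complex.ofReal_sub, Complex.zero_le_real] at h
  linarith

theorem mul_log_div_lt_sub {a b : ℝ} (ha : 0 ≤ a) (hb : 0 ≤ b) (hab : 0 < b → 0 < a)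
    (hne : a ≠ b) : b * Real.log (a / b) < a - b := by
  rcases hb.eq_or_lt with rfl | hb
  · simpa using ha.lt_of_ne' hne
  have hlog := Real.log_lt_sub_one_of_pos (div_pos (hab hb) hb)
    (by simpa [div_eq_one_iff_eq hb.ne'])
  calc b * Real.log (a / b) < b * (a / b - 1) := mul_lt_mul_of_pos_left hlog hb
    _ = a - b := by field_simp

theorem mul_log_div_le_sub {a b : ℝ} (ha : 0 ≤ a) (hb : 0 ≤ b) (hab : 0 < b → 0 < a) :
    b * Real.log (a / b) ≤ a - b := by
  rcases eq_or_ne a b with rfl | hne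
  · by_cases ha0 : a = 0 <;> simp [ha0]
  · exact (mul_log_div_lt_sub ha hb hab hne).le

theorem prod_natCast_pow_self_pos {ι : Type*} (s : Finset ι) (b : ι → ℕ) :
    0 < ∏ j ∈ s, (b j : ℝ) ^ b j :=
  prod_pos fun j _ => by
    rcases (b j).eq_zero_or_pos with h | h
    · simp [h]
    · positivity

theorem eq_of_sum_le_of_prod_pow_le {ι : Type*} [Fintype ι] {a : ι → ℝ} {b : ι → ℕ}
    (ha : ∀ j, 0 ≤ a j) (hsum : ∑ j, a j ≤ ∑ j, (b j : ℝ))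
    (hprod : ∏ j, (b j : ℝ) ^ b j ≤ ∏ j, a j ^ b j) (j : ι) : a j = b j := by
  have hb := prod_natCast_pow_self_pos univ b
  have hab : ∀ j, 0 < (b j : ℝ) → 0 < a j := fun j hj => (ha j).lt_of_ne' fun h =>
    (hb.trans_le hprod).ne' <| prod_eq_zero (mem_univ j) <| by
      rw [h]; exact zero_pow (Nat.cast_pos.mp hj).ne'
  have hlog : 0 ≤ ∑ j, (b j : ℝ) * Real.log (a j / b j) := by
    have hne : ∀ j ∈ univ, (a j / b j) ^ b j ≠ 0 := fun j _ => by
      rcases (b j).eq_zero_or_pos with h | h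
      · simp [h]
      · have := hab j (by exact_mod_cast h); positivity
    simp only [← Real.log_pow]
    rw [← Real.log_prod hne]
    simp only [div_pow, prod_div_distrib]
    exact Real.log_nonneg ((one_le_div hb).mpr hprod)
  by_contra hj
  have hlt : ∑ j, (b j : ℝ) * Real.log (a j / b j) < ∑ j, (a j - b j) :=
    sum_lt_sum (fun j _ => mul_log_div_le_sub (ha j) (Nat.cast_nonneg _) (hab j))
      ⟨j, mem_univ j, mul_log_div_lt_sub (ha j) (Nat.cast_nonneg _) (hab j) hj⟩
  rw [sum_sub_distrib] at hlt
  linarith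

theorem prod_mul_pow {ι M : Type*} [CommMonoid M] (s : Finset ι) (c : M) (x : ι → M)
    (n : ι → ℕ) : ∏ j ∈ s, (c * x j) ^ n j = c ^ (∑ j ∈ s, n j) * ∏ j ∈ s, x j ^ n j := by
  simp only [mul_pow, prod_mul_distrib, prod_pow_eq_pow_sum]

theorem eq_div_sum_of_sum_le_one_of_prod_pow_le {ι : Type*} [Fintype ι] {p : ι → ℝ}
    {n : ι → ℕ} (hp : ∀ j, 0 ≤ p j) (hsum : ∑ j, p j ≤ 1) (hn : 0 < ∑ j, n j)
    (hprod : ∏ j, ((n j : ℝ) / (∑ i, n i : ℕ)) ^ n j ≤ ∏ j, p j ^ n j) (j : ι) :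
    p j = n j / (∑ i, n i : ℕ) := by
  set N : ℝ := ((∑ i, n i : ℕ) : ℝ)
  have hN : 0 < N := Nat.cast_pos.mpr hn
  have key : N * p j = n j := by
    refine eq_of_sum_le_of_prod_pow_le (fun j => mul_nonneg hN.le (hp j)) ?_ ?_ j
    · rw [← mul_sum, ← Nat.cast_sum]
      exact mul_le_of_le_one_right hN.le hsum
    · calc ∏ j, (n j : ℝ) ^ n j = ∏ j, (N * (n j / N)) ^ n j := by
            simp only [mul_div_cancel₀ _ hN.ne']
        _ ≤ ∏ j, (N * p j) ^ n j := by
            rw [prod_mul_pow, prod_mul_pow]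
            gcongr
  rw [← key, mul_div_cancel_left₀ _ hN.ne']

theorem stmt2_general (d M : ℕ)
    (ψ : Fin M → (Fin d → ℂ))
    (hPOVM : Matrix.PosSemidef
      ((1 : Matrix (Fin d) (Fin d) ℂ) - ∑ j, Matrix.vecMulVec (ψ j) (star (ψ j))))
    (n : Fin M → ℕ) (N : ℕ) (hN : N = ∑ j, n j) (hNpos : 0 < N)
    (f : Fin M → ℝ) (hf : ∀ j, f j = (n j : ℝ) / N) :
    (∃ φ : Fin d → ℂ, inp φ φ = 1 ∧
        ∏ j, ‖inp φ (ψ j)‖ ^ (2 * n j) = ∏ j, (f j) ^ (n j)) ↔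
      (∃ φs : Fin d → ℂ, inp φs φs = 1 ∧
        ∀ j, ‖inp φs (ψ j)‖ ^ 2 = f j) := by
  subst hN
  obtain rfl : f = fun j => (n j : ℝ) / (∑ i, n i : ℕ) := funext hf
  constructor
  · rintro ⟨φ, hφ, hprod⟩
    refine ⟨φ, hφ, eq_div_sum_of_sum_le_one_of_prod_pow_le (fun j => sq_nonneg _)
      (sum_norm_inp_sq_le_one hPOVM hφ) hNpos ?_⟩
    simp only [← pow_mul, hprod, le_refl]
  · rintro ⟨φs, hφs, hsq⟩
    exact ⟨φs, hφs, prod_congr rfl fun j _ => by rw [pow_mul, hsq]⟩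

theorem stmt2 (d M : ℕ) (hd : 1 ≤ d) (hM : 1 ≤ M)
    (ψ : Fin M → (Fin d → ℂ))
    (hPOVM : Matrix.PosSemidef
      ((1 : Matrix (Fin d) (Fin d) ℂ) - ∑ j, Matrix.vecMulVec (ψ j) (star (ψ j))))
    (n : Fin M → ℕ) (N : ℕ) (hN : N = ∑ j, n j) (hNpos : 0 < N)
    (f : Fin M → ℝ) (hf : ∀ j, f j = (n j : ℝ) / N) :
    (∃ φ : Fin d → ℂ, inp φ φ = 1 ∧
        ∏ j, ‖inp φ (ψ j)‖ ^ (2 * n j) = ∏ j, (f j) ^ (n j)) ↔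
      (∃ φs : Fin d → ℂ, inp φs φs = 1 ∧
        ∀ j, ‖inp φs (ψ j)‖ ^ 2 = f j) :=
  stmt2_general d M ψ hPOVM n N hN hNpos f hf
end

section
/- Let M ≥ 1, let ψ₁, …, ψ_M be unit vectors in ℂ², and let n₁, …, n_M be natural numbers. Suppose there exists a unit vector χ ∈ ℂ² with |⟨χ, ψ_j⟩|² ≥ 1/2 for every j (i.e., the Bloch vectors of the ψ_j lie in a common closed half sphere). Then there exists a unit vector φ ∈ ℂ² such that for every density matrix ρ on ℂ² one has ∏_{j=1}^M (ψ_j† ρ ψ_j)^{n_j} ≤ ∏_{j=1}^M |⟨φ, ψ_j⟩|^{2 n_j}; that is, the likelihood functional ρ ↦ ∏_j (ψ_j† ρ ψ_j)^{n_j} attains its maximum over density matrices at a pure state. -/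
open scoped BigOperators ComplexOrder

/-!
A density matrix on `ℂ²` is `ρ = (1 + r·σ)/2` with Bloch vector `r` in the closed unit ball, a pure
state `ψ` has a Bloch vector `s_ψ` on the unit sphere, and `ψ†ρψ = (1 + ⟪r, s_ψ⟫)/2`. So the
likelihood is `L r = ∏ ((1 + ⟪r, s_j⟫)/2)^{n_j}` on the ball, and `|⟨φ, ψ⟩|² = (1 + ⟪s_φ, s_ψ⟫)/2`.
With `c` the Bloch vector of `χ`, the hypothesis says `⟪c, s_j⟫ ≥ 0`; pushing any `r` in the
ball along `c` until it reaches the sphere increases every (nonnegative) factor of `L`. Hence `L`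
is bounded on the ball by its maximum over the compact sphere, attained at the Bloch vector of a
pure state `φ`.
-/

open scoped RealInnerProductSpace ComplexConjugate
open Complex

theorem EuclideanSpace.inner_vec3 (a b c a' b' c' : ℝ) :
    ⟪(!₂[a, b, c] : EuclideanSpace ℝ (Fin 3)), !₂[a', b', c']⟫ = a * a' + b * b' + c * c' := by
  simp only [PiLp.inner_apply, Fin.sum_univ_three, Matrix.cons_val_zero, Matrix.cons_val_one,
    Matrix.cons_val, RCLike.inner_apply, Real.ringHom_apply]
  ring

theorem inp_self_eq_one_iff {ψ : Fin 2 → ℂ} :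
    inp ψ ψ = 1 ↔ normSq (ψ 0) + normSq (ψ 1) = 1 := by
  rw [inp, Fin.sum_univ_two, ← normSq_eq_conj_mul_self, ← normSq_eq_conj_mul_self]
  exact_mod_cast Iff.rfl

-- The Bloch vector of the projector `ψψ†`, i.e. `(vecMulVec ψ (star ψ)).blochVector`.
noncomputable def blochVector (ψ : Fin 2 → ℂ) : EuclideanSpace ℝ (Fin 3) :=
  !₂[2 * (conj (ψ 0) * ψ 1).re, 2 * (conj (ψ 0) * ψ 1).im, normSq (ψ 0) - normSq (ψ 1)]

-- The `r` with `ρ = (1 + r₀σₓ + r₁σ_y + r₂σ_z)/2` when `ρ` is Hermitian of trace one.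
noncomputable def Matrix.blochVector (ρ : Matrix (Fin 2) (Fin 2) ℂ) : EuclideanSpace ℝ (Fin 3) :=
  !₂[2 * (ρ 0 1).re, -(2 * (ρ 0 1).im), (ρ 0 0).re - (ρ 1 1).re]

theorem norm_inp_sq_eq {φ ψ : Fin 2 → ℂ} (hφ : inp φ φ = 1) (hψ : inp ψ ψ = 1) :
    ‖inp φ ψ‖ ^ 2 = (1 + ⟪blochVector φ, blochVector ψ⟫) / 2 := by
  rw [inp_self_eq_one_iff] at hφ hψ
  rw [Complex.sq_norm, blochVector, blochVector, EuclideanSpace.inner_vec3, inp, Fin.sum_univ_two]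
  simp only [normSq_apply, add_re, add_im, mul_re, mul_im, conj_re, conj_im] at *
  linear_combination (1 / 2 * ((ψ 0).re * (ψ 0).re + (ψ 0).im * (ψ 0).im
    + (ψ 1).re * (ψ 1).re + (ψ 1).im * (ψ 1).im)) * hφ + 1 / 2 * hψ

theorem norm_blochVector {ψ : Fin 2 → ℂ} (hψ : inp ψ ψ = 1) : ‖blochVector ψ‖ = 1 := by
  have h := norm_inp_sq_eq hψ hψ
  rw [hψ, norm_one, real_inner_self_eq_norm_sq] at h
  have : ‖blochVector ψ‖ ^ 2 = 1 ^ 2 := by linarith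
  exact (pow_left_inj₀ (norm_nonneg _) zero_le_one two_ne_zero).1 this

theorem Matrix.IsHermitian.entries_of_trace_eq_one {ρ : Matrix (Fin 2) (Fin 2) ℂ}
    (hρ : ρ.IsHermitian) (htr : ρ.trace = 1) :
    ρ 1 0 = conj (ρ 0 1) ∧ (ρ 0 0).im = 0 ∧ (ρ 1 1).im = 0 ∧ (ρ 0 0).re + (ρ 1 1).re = 1 :=
  ⟨(hρ.apply 1 0).symm, conj_eq_iff_im.1 (hρ.apply 0 0), conj_eq_iff_im.1 (hρ.apply 1 1),
    by simpa [Matrix.trace_fin_two] using congrArg re htr⟩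

theorem re_star_dotProduct_mulVec_eq {ρ : Matrix (Fin 2) (Fin 2) ℂ} (hρ : ρ.IsHermitian)
    (htr : ρ.trace = 1) {ψ : Fin 2 → ℂ} (hψ : inp ψ ψ = 1) :
    (dotProduct (star ψ) (ρ.mulVec ψ)).re = (1 + ⟪ρ.blochVector, blochVector ψ⟫) / 2 := by
  rw [inp_self_eq_one_iff] at hψ
  obtain ⟨h10, h00, h11, htr'⟩ := hρ.entries_of_trace_eq_one htr
  rw [Matrix.blochVector, blochVector, EuclideanSpace.inner_vec3]
  simp only [dotProduct, Matrix.mulVec, Fin.sum_univ_two, Pi.star_apply, h10, RCLike.star_def]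
  simp only [normSq_apply, add_re, add_im, mul_re, mul_im, conj_re, conj_im] at *
  linear_combination (1 / 2 * ((ψ 0).re * (ψ 0).re + (ψ 0).im * (ψ 0).im
    + (ψ 1).re * (ψ 1).re + (ψ 1).im * (ψ 1).im)) * htr' + 1 / 2 * hψ

theorem Matrix.PosSemidef.norm_blochVector_le_one {ρ : Matrix (Fin 2) (Fin 2) ℂ}
    (hρ : ρ.PosSemidef) (htr : ρ.trace = 1) : ‖ρ.blochVector‖ ≤ 1 := by
  obtain ⟨h10, h00, h11, htr'⟩ := hρ.1.entries_of_trace_eq_one htr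
  have hdet : 0 ≤ (ρ 0 0).re * (ρ 1 1).re - normSq (ρ 0 1) := by
    simpa [Matrix.det_fin_two, h10, mul_re, h00, h11, normSq_apply] using re_le_re hρ.det_nonneg
  have hsq : ‖ρ.blochVector‖ ^ 2 ≤ 1 ^ 2 := by
    rw [← real_inner_self_eq_norm_sq, Matrix.blochVector, EuclideanSpace.inner_vec3]
    rw [normSq_apply] at hdet
    nlinarith
  exact (pow_le_pow_iff_left₀ (norm_nonneg _) zero_le_one two_ne_zero).1 hsq

theorem exists_blochVector_eq {r : EuclideanSpace ℝ (Fin 3)} (hr : ‖r‖ = 1) :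
    ∃ φ : Fin 2 → ℂ, inp φ φ = 1 ∧ blochVector φ = r := by
  obtain ⟨x, y, z, rfl⟩ : ∃ x y z : ℝ, r = !₂[x, y, z] :=
    ⟨r 0, r 1, r 2, by ext i; fin_cases i <;> rfl⟩
  have hsum : x * x + y * y + z * z = 1 := by
    rw [← EuclideanSpace.inner_vec3, real_inner_self_eq_norm_sq, hr, one_pow]
  simp_rw [inp_self_eq_one_iff, blochVector]
  rcases eq_or_ne z (-1) with rfl | hz
  · refine ⟨![0, 1], by simp, ?_⟩
    have hx : x = 0 := by nlinarith
    have hy : y = 0 := by nlinarith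
    simp [hx, hy]
  · have hz1 : 0 < 1 + z := by
      have : -1 ≤ z := by nlinarith
      linarith [lt_of_le_of_ne this hz.symm]
    have ha : 0 < (1 + z) / 2 := half_pos hz1
    set p := Real.sqrt ((1 + z) / 2)
    have hp : 0 < p := Real.sqrt_pos.2 ha
    have hp2 : p * p = (1 + z) / 2 := Real.mul_self_sqrt ha.le
    have hp0 : normSq (p : ℂ) = (1 + z) / 2 := by rw [normSq_ofReal, hp2]
    have hp1 : normSq ((x + y * I) / (2 * p)) = (1 - z) / 2 := by
      rw [normSq_div, normSq_add_mul_I, normSq_mul, normSq_ofReal, normSq_ofNat, hp2]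
      field_simp
      linear_combination hsum
    refine ⟨![(p : ℂ), (x + y * I) / (2 * p)], ?_, ?_⟩
    · simp only [Matrix.cons_val_zero, Matrix.cons_val_one, hp0, hp1]
      ring
    · have hw : conj (p : ℂ) * ((x + y * I) / (2 * p)) = (x + y * I) / 2 := by
        rw [conj_ofReal]
        field_simp
      simp only [Matrix.cons_val_zero, Matrix.cons_val_one, hw, hp0, hp1]
      simp only [div_ofNat_re, div_ofNat_im, add_re, add_im, ofReal_re, ofReal_im, mul_re, mul_im,
        I_re, I_im]
      ring_nf

theorem exists_nonneg_norm_add_smul_eq {E : Type*} [SeminormedAddCommGroup E] [NormedSpace ℝ E]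
    {r c : E} {R : ℝ} (hr : ‖r‖ ≤ R) (hc : ‖c‖ = 1) : ∃ t : ℝ, 0 ≤ t ∧ ‖r + t • c‖ = R := by
  have hR : 0 ≤ R := (norm_nonneg r).trans hr
  have hcont : Continuous fun t : ℝ => ‖r + t • c‖ := by fun_prop
  have hend : R ≤ ‖r + (2 * R) • c‖ := by
    have := norm_sub_norm_le ((2 * R) • c) (-r)
    rw [sub_neg_eq_add, add_comm, norm_neg, norm_smul, hc, Real.norm_of_nonneg (by positivity)] at this
    linarith
  obtain ⟨t, ht, hrt⟩ := intermediate_value_Icc (by positivity) hcont.continuousOn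
    ⟨by simpa using hr, hend⟩
  exact ⟨t, ht.1, hrt⟩

section Likelihood

variable {ι E : Type*} [Fintype ι] [NormedAddCommGroup E] [InnerProductSpace ℝ E]

noncomputable def likelihood (s : ι → E) (n : ι → ℕ) (r : E) : ℝ :=
  ∏ j, ((1 + ⟪r, s j⟫) / 2) ^ n j

theorem continuous_likelihood (s : ι → E) (n : ι → ℕ) : Continuous (likelihood s n) := by
  unfold likelihood
  fun_prop

theorem likelihood_le_likelihood_add_smul {s : ι → E} (n : ι → ℕ) {r c : E} {t : ℝ}
    (hr : ‖r‖ ≤ 1) (hs : ∀ j, ‖s j‖ ≤ 1) (hc : ∀ j, 0 ≤ ⟪c, s j⟫) (ht : 0 ≤ t) :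
    likelihood s n r ≤ likelihood s n (r + t • c) := by
  have hfactor (j : ι) : 0 ≤ (1 + ⟪r, s j⟫) / 2 := by
    have := (abs_real_inner_le_norm r (s j)).trans (mul_le_one₀ hr (norm_nonneg _) (hs j))
    linarith [neg_abs_le ⟪r, s j⟫]
  refine Finset.prod_le_prod (fun j _ => pow_nonneg (hfactor j) _)
    (fun j _ => pow_le_pow_left₀ (hfactor j) ?_ _)
  rw [inner_add_left, real_inner_smul_left]
  linarith [mul_nonneg ht (hc j)]

end Likelihood

theorem stmt4_general (M : ℕ)
    (ψ : Fin M → (Fin 2 → ℂ)) (hψ : ∀ j, inp (ψ j) (ψ j) = 1)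
    (n : Fin M → ℕ)
    (hhalf : ∃ χ : Fin 2 → ℂ, inp χ χ = 1 ∧
      ∀ j, (1 : ℝ) / 2 ≤ ‖inp χ (ψ j)‖ ^ 2) :
    ∃ φ : Fin 2 → ℂ, inp φ φ = 1 ∧
      ∀ ρ : Matrix (Fin 2) (Fin 2) ℂ, ρ.PosSemidef → ρ.trace = 1 →
        ∏ j, (dotProduct (star (ψ j)) (ρ.mulVec (ψ j))).re ^ (n j)
          ≤ ∏ j, ‖inp φ (ψ j)‖ ^ (2 * n j) := by
  obtain ⟨χ, hχ, hχψ⟩ := hhalf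
  set s := fun j => blochVector (ψ j)
  have hs (j : Fin M) : ‖s j‖ ≤ 1 := (norm_blochVector (hψ j)).le
  have hχs (j : Fin M) : 0 ≤ ⟪blochVector χ, s j⟫ := by
    linarith [hχψ j, norm_inp_sq_eq hχ (hψ j)]
  obtain ⟨r, hr, hmax⟩ := (isCompact_sphere (0 : EuclideanSpace ℝ (Fin 3)) 1).exists_isMaxOn
    (NormedSpace.sphere_nonempty.2 zero_le_one) (continuous_likelihood s n).continuousOn
  obtain ⟨φ, hφ, rfl⟩ := exists_blochVector_eq (mem_sphere_zero_iff_norm.1 hr)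
  refine ⟨φ, hφ, fun ρ hρ htr => ?_⟩
  obtain ⟨t, ht, hρt⟩ :=
    exists_nonneg_norm_add_smul_eq (hρ.norm_blochVector_le_one htr) (norm_blochVector hχ)
  calc ∏ j, (dotProduct (star (ψ j)) (ρ.mulVec (ψ j))).re ^ (n j)
      = likelihood s n ρ.blochVector := by
        simp only [likelihood, s, re_star_dotProduct_mulVec_eq hρ.1 htr (hψ _)]
    _ ≤ likelihood s n (ρ.blochVector + t • blochVector χ) :=
        likelihood_le_likelihood_add_smul n (hρ.norm_blochVector_le_one htr) hs hχs ht
    _ ≤ likelihood s n (blochVector φ) := hmax (mem_sphere_zero_iff_norm.2 hρt)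
    _ = ∏ j, ‖inp φ (ψ j)‖ ^ (2 * n j) := by
        simp only [likelihood, s, pow_mul, norm_inp_sq_eq hφ (hψ _)]

theorem stmt4 (M : ℕ) (hM : 1 ≤ M)
    (ψ : Fin M → (Fin 2 → ℂ)) (hψ : ∀ j, inp (ψ j) (ψ j) = 1)
    (n : Fin M → ℕ)
    (hhalf : ∃ χ : Fin 2 → ℂ, inp χ χ = 1 ∧
      ∀ j, (1 : ℝ) / 2 ≤ ‖inp χ (ψ j)‖ ^ 2) :
    ∃ φ : Fin 2 → ℂ, inp φ φ = 1 ∧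
      ∀ ρ : Matrix (Fin 2) (Fin 2) ℂ, ρ.PosSemidef → ρ.trace = 1 →
        ∏ j, (dotProduct (star (ψ j)) (ρ.mulVec (ψ j))).re ^ (n j)
          ≤ ∏ j, ‖inp φ (ψ j)‖ ^ (2 * n j) :=
  stmt4_general M ψ hψ n hhalf
end

section
/- For any three unit vectors ψ₁, ψ₂, ψ₃ in ℂ² there exists a unit vector χ ∈ ℂ² such that |⟨χ, ψ_j⟩|² ≥ 1/2 for j = 1, 2, 3 (equivalently, the three Bloch vectors of ψ₁, ψ₂, ψ₃ lie in a common closed half sphere). -/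
open scoped BigOperators

/-!
Complete `ψ 0` to an orthonormal basis `(ψ 0, f)` of the two-dimensional space. For
`χ = (ψ 0 + ζ̄ f) / √2` with `|ζ| = 1`, Parseval gives, for every unit vector `w`,
`|⟨χ, w⟩|² = 1/2 + Re (ζ · conj ⟨ψ 0, w⟩ · ⟨f, w⟩)`.
The correction term vanishes for `w = ψ 0`. Rotating the phase `ζ` makes it vanish for `w = ψ 1`
as well, and of the two phases that do so, one makes it nonnegative for `w = ψ 2`.
-/

open scoped InnerProductSpace ComplexConjugate

lemma Complex.exists_norm_eq_one_re_mul_eq_zero_and_re_mul_nonneg (u v : ℂ) :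
    ∃ ζ : ℂ, ‖ζ‖ = 1 ∧ (ζ * u).re = 0 ∧ 0 ≤ (ζ * v).re := by
  set ζ₀ := I * exp (↑(-u.arg) * I)
  have hζ₀ : ‖ζ₀‖ = 1 := by rw [norm_mul, norm_I, norm_exp_ofReal_mul_I, one_mul]
  have hζ₀u : ζ₀ * u = I * ‖u‖ := by
    conv_lhs => rw [← norm_mul_exp_arg_mul_I u]
    rw [show ζ₀ * (‖u‖ * exp (u.arg * I)) = I * ‖u‖ * exp (↑(-u.arg) * I + u.arg * I) by
      rw [exp_add]; ring]
    simp
  rcases le_total 0 (ζ₀ * v).re with h | h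
  · exact ⟨ζ₀, hζ₀, by simp [hζ₀u], h⟩
  · exact ⟨-ζ₀, by rwa [norm_neg], by simp [neg_mul, hζ₀u], by rwa [neg_mul, neg_re, neg_nonneg]⟩

section InnerProductSpace

variable {E : Type*} [NormedAddCommGroup E] [InnerProductSpace ℂ E]

lemma norm_inner_smul_add_sq (e f w : E) {ζ : ℂ} (hζ : ‖ζ‖ = 1) :
    ‖⟪((√2 : ℝ) : ℂ)⁻¹ • (e + conj ζ • f), w⟫_ℂ‖ ^ 2 =
      (‖⟪e, w⟫_ℂ‖ ^ 2 + ‖⟪f, w⟫_ℂ‖ ^ 2) / 2 + (ζ * (conj ⟪e, w⟫_ℂ * ⟪f, w⟫_ℂ)).re := by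
  rw [inner_smul_left, inner_add_left, inner_smul_left, Complex.conj_conj, map_inv₀,
    Complex.conj_ofReal, norm_mul, mul_pow, norm_inv, Complex.norm_real,
    Real.norm_of_nonneg (Real.sqrt_nonneg _), inv_pow, Real.sq_sqrt zero_le_two,
    Complex.sq_norm, Complex.normSq_add, ← Complex.sq_norm, ← Complex.sq_norm, norm_mul, hζ,
    one_mul, ← Complex.conj_re]
  simp only [map_mul, Complex.conj_conj]
  rw [mul_left_comm (conj ⟪e, w⟫_ℂ)]
  ring

lemma norm_smul_add_eq_one {e f : E} (he : ‖e‖ = 1) (hf : ‖f‖ = 1) (hef : ⟪e, f⟫_ℂ = 0)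
    {c : ℂ} (hc : ‖c‖ = 1) :
    ‖((√2 : ℝ) : ℂ)⁻¹ • (e + c • f)‖ = 1 := by
  have h2 : ‖e + c • f‖ ^ 2 = 2 := by
    rw [sq, norm_add_sq_eq_norm_sq_add_norm_sq_of_inner_eq_zero (𝕜 := ℂ) _ _
      (by rw [inner_smul_right, hef, mul_zero]), norm_smul, hc, he, hf]
    norm_num
  rw [norm_smul, norm_inv, Complex.norm_real, Real.norm_of_nonneg (Real.sqrt_nonneg _),
    ← Real.sqrt_sq (norm_nonneg (e + c • f)), h2, inv_mul_cancel₀ (by positivity)]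

lemma exists_orthonormalBasis_fin_two_apply_zero (hE : Module.finrank ℂ E = 2) {e : E}
    (he : ‖e‖ = 1) : ∃ b : OrthonormalBasis (Fin 2) ℂ E, b 0 = e := by
  have := FiniteDimensional.of_finrank_eq_succ hE
  obtain ⟨b, hb⟩ := Orthonormal.exists_orthonormalBasis_extension_of_card_eq (𝕜 := ℂ)
    (v := fun _ : Fin 2 => e) (s := {0}) (by simpa using hE) (by
      rw [orthonormal_iff_ite]
      rintro ⟨_, rfl⟩ ⟨_, rfl⟩
      simp [inner_self_eq_norm_sq_to_K, he])
  exact ⟨b, hb 0 rfl⟩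

theorem exists_norm_eq_one_half_le_norm_inner_sq (hE : Module.finrank ℂ E = 2)
    (ψ : Fin 3 → E) (hψ : ∀ j, ‖ψ j‖ = 1) :
    ∃ χ : E, ‖χ‖ = 1 ∧ ∀ j, 1 / 2 ≤ ‖⟪χ, ψ j⟫_ℂ‖ ^ 2 := by
  obtain ⟨b, hb⟩ := exists_orthonormalBasis_fin_two_apply_zero hE (hψ 0)
  set u : Fin 3 → ℂ := fun j => conj ⟪b 0, ψ j⟫_ℂ * ⟪b 1, ψ j⟫_ℂ
  obtain ⟨ζ, hζ, hζu₁, hζu₂⟩ :=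
    Complex.exists_norm_eq_one_re_mul_eq_zero_and_re_mul_nonneg (u 1) (u 2)
  have hb01 : ⟪b 0, b 1⟫_ℂ = 0 := b.orthonormal.2 (by decide)
  refine ⟨((√2 : ℝ) : ℂ)⁻¹ • (b 0 + conj ζ • b 1),
    norm_smul_add_eq_one (b.norm_eq_one 0) (b.norm_eq_one 1) hb01 (by rwa [Complex.norm_conj]),
    fun j => ?_⟩
  have parseval := b.sum_sq_norm_inner_right (ψ j)
  rw [Fin.sum_univ_two, hψ j, one_pow] at parseval
  rw [norm_inner_smul_add_sq _ _ _ hζ, parseval, le_add_iff_nonneg_right]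
  fin_cases j
  · have hb10 : ⟪b 1, ψ 0⟫_ℂ = 0 := by rw [← hb, ← inner_conj_symm, hb01, map_zero]
    simp [hb10]
  · exact hζu₁.ge
  · exact hζu₂

end InnerProductSpace

lemma inp_eq_inner_toLp {d : ℕ} (φ φ' : Fin d → ℂ) :
    inp φ φ' = ⟪WithLp.toLp 2 φ, WithLp.toLp 2 φ'⟫_ℂ := by
  simp [inp, PiLp.inner_apply, mul_comm]

theorem stmt5 (ψ : Fin 3 → (Fin 2 → ℂ)) (hψ : ∀ j, inp (ψ j) (ψ j) = 1) :
    ∃ χ : Fin 2 → ℂ, inp χ χ = 1 ∧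
      ∀ j, (1 : ℝ) / 2 ≤ ‖inp χ (ψ j)‖ ^ 2 := by
  have hψ_norm : ∀ j, ‖WithLp.toLp 2 (ψ j)‖ = 1 := by
    intro j
    have h := hψ j
    rw [inp_eq_inner_toLp, inner_self_eq_norm_sq_to_K, ← RCLike.ofReal_pow,
      ← RCLike.ofReal_one, RCLike.ofReal_inj] at h
    exact (pow_eq_one_iff_of_nonneg (norm_nonneg _) two_ne_zero).1 h
  obtain ⟨χ, hχ, hhalf⟩ :=
    exists_norm_eq_one_half_le_norm_inner_sq finrank_euclideanSpace_fin _ hψ_norm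
  refine ⟨χ.ofLp, ?_, fun j => ?_⟩
  · simp [inp_eq_inner_toLp, inner_self_eq_norm_sq_to_K, hχ]
  · simpa [inp_eq_inner_toLp] using hhalf j
end

section
/- Let d ≥ 1, let ψ₁, ψ₂, ψ₃ be unit vectors in ℂ^d and let n₁, n₂, n₃ be natural numbers. Then there exists a unit vector φ ∈ ℂ^d such that for every density matrix ρ on ℂ^d one has ∏_{j=1}^3 (ψ_j† ρ ψ_j)^{n_j} ≤ ∏_{j=1}^3 |⟨φ, ψ_j⟩|^{2 n_j}; that is, the likelihood functional ρ ↦ ∏_{j=1}^3 (ψ_j† ρ ψ_j)^{n_j} built from any three pure states attains its maximum over density matrices at a pure state. -/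
/-!
Write `ρ = ∑ₖ wₖ wₖ†` with pairwise orthogonal `wₖ` (spectral theorem), so that
`ψ† ρ ψ = ∑ₖ |⟨wₖ, ψ⟩|²` and `∑ₖ ‖wₖ‖² = tr ρ`. Two orthogonal terms `w, w'` can be merged into a
single vector of squared norm `‖w‖² + ‖w'‖²` without decreasing any of the three values
`|⟨·, ψⱼ⟩|²`. In the plane of `w, w'` this says that a `2 × 2` density matrix can be replaced by a
pure state of the same trace without decreasing three linear functionals: `2 × 2` positive
matrices of trace `T` form the Bloch ball of radius `T / 2` in `ℝ³`, pure states its boundary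
sphere, and three linear functionals on `ℝ³` have a common direction `v ≠ 0` on which none is
negative, so one moves along `v` until the sphere is hit. Merging all the terms gives a unit
vector `u` whose likelihood dominates that of `ρ`, and the likelihood of `u` is at most that of a
maximiser `φ` of the likelihood on the compact unit sphere.
-/

open scoped BigOperators ComplexOrder

open scoped ComplexConjugate InnerProductSpace

theorem exists_ne_zero_forall_nonneg_of_card_le_finrank {𝕜 V ι : Type*} [Field 𝕜] [LinearOrder 𝕜]
    [IsStrictOrderedRing 𝕜] [AddCommGroup V] [Module 𝕜 V] [FiniteDimensional 𝕜 V] [Fintype ι]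
    [Nonempty ι] (h : Fintype.card ι ≤ Module.finrank 𝕜 V) (ℓ : ι → V →ₗ[𝕜] 𝕜) :
    ∃ v ≠ 0, ∀ i, 0 ≤ ℓ i v := by
  set L := LinearMap.pi ℓ
  by_cases hL : Function.Injective L
  · have hrank : Module.finrank 𝕜 V = Module.finrank 𝕜 (ι → 𝕜) :=
      (LinearMap.finrank_le_finrank_of_injective hL).antisymm (by simpa using h)
    obtain ⟨v, hv⟩ := (LinearMap.injective_iff_surjective_of_finrank_eq_finrank hrank).mp hL 1
    refine ⟨v, ?_, fun i => ?_⟩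
    · rintro rfl
      simpa using congrFun hv (Classical.arbitrary ι)
    · rw [← LinearMap.pi_apply ℓ, congrFun hv i]
      exact zero_le_one
  · obtain ⟨v, hv, hv0⟩ : ∃ v ∈ LinearMap.ker L, v ≠ 0 :=
      Submodule.exists_mem_ne_zero_of_ne_bot (by rwa [Ne, LinearMap.ker_eq_bot])
    exact ⟨v, hv0, fun i => (congrFun (LinearMap.mem_ker.mp hv) i).ge⟩

theorem exists_nonneg_norm_add_smul_eq_s7 {E : Type*} [NormedAddCommGroup E] [NormedSpace ℝ E]
    {x y : E} {r : ℝ} (hx : ‖x‖ ≤ r) (hy : y ≠ 0) : ∃ t : ℝ, 0 ≤ t ∧ ‖x + t • y‖ = r := by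
  have hy' : 0 < ‖y‖ := norm_pos_iff.mpr hy
  set t₁ := (r + ‖x‖) / ‖y‖
  have ht₁ : 0 ≤ t₁ := div_nonneg (by linarith [norm_nonneg x]) hy'.le
  have hfar : r ≤ ‖x + t₁ • y‖ := by
    have : ‖t₁ • y‖ = r + ‖x‖ := by
      rw [norm_smul, Real.norm_of_nonneg ht₁, div_mul_cancel₀ _ hy'.ne']
    have := norm_sub_le (x + t₁ • y) x
    rw [add_sub_cancel_left] at this
    linarith
  obtain ⟨t, ⟨ht, -⟩, hrt⟩ := intermediate_value_Icc ht₁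
    (by fun_prop : Continuous fun t : ℝ => ‖x + t • y‖).continuousOn ⟨by simpa using hx, hfar⟩
  exact ⟨t, ht, hrt⟩

namespace Complex

theorem exists_sq_norm_eq_mul_conj_eq {P Q : ℝ} (hP : 0 ≤ P) (hQ : 0 ≤ Q) {w : ℂ}
    (hw : ‖w‖ ^ 2 = P * Q) : ∃ z₁ z₂ : ℂ, ‖z₁‖ ^ 2 = P ∧ ‖z₂‖ ^ 2 = Q ∧ z₁ * conj z₂ = w := by
  refine ⟨Real.sqrt P, Real.sqrt Q * conj (exp (arg w * I)), ?_, ?_, ?_⟩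
  · simp [Real.sq_sqrt hP]
  · simp [Real.sq_sqrt hQ]
  · have : ‖w‖ = Real.sqrt P * Real.sqrt Q := by
      rw [← Real.sqrt_mul hP, ← hw, Real.sqrt_sq (norm_nonneg w)]
    rw [map_mul, conj_conj, conj_ofReal, ← mul_assoc, ← ofReal_mul, ← this,
      norm_mul_exp_arg_mul_I]

noncomputable def blochVec (a b : ℂ) : EuclideanSpace ℝ (Fin 3) :=
  !₂[‖a‖ ^ 2 - ‖b‖ ^ 2, 2 * (a * conj b).re, -2 * (a * conj b).im]

/-- `blochForm T m a b = v† M v` for `v = (a, b)` and the Hermitian matrix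
`M = [[T/2 + m₀, m₁ - i m₂], [m₁ + i m₂, T/2 - m₀]]` of trace `T` and Bloch vector `m`;
`M` is positive iff `‖m‖ ≤ T / 2` and of rank one iff `‖m‖ = T / 2`. -/
noncomputable def blochForm (T : ℝ) (m : EuclideanSpace ℝ (Fin 3)) (a b : ℂ) : ℝ :=
  T / 2 * (‖a‖ ^ 2 + ‖b‖ ^ 2) + ⟪blochVec a b, m⟫_ℝ

theorem blochForm_eq (T : ℝ) (m : EuclideanSpace ℝ (Fin 3)) (a b : ℂ) :
    blochForm T m a b = T / 2 * (‖a‖ ^ 2 + ‖b‖ ^ 2) + m 0 * (‖a‖ ^ 2 - ‖b‖ ^ 2)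
      + 2 * m 1 * (a * conj b).re - 2 * m 2 * (a * conj b).im := by
  simp only [blochForm, blochVec, PiLp.inner_apply, RCLike.inner_apply, conj_trivial,
    Fin.sum_univ_three, Matrix.cons_val_zero, Matrix.cons_val_one, Matrix.cons_val]
  ring

theorem blochForm_diagonal (p q : ℝ) (a b : ℂ) :
    blochForm (p + q) !₂[(p - q) / 2, 0, 0] a b = p * ‖a‖ ^ 2 + q * ‖b‖ ^ 2 := by
  rw [blochForm_eq]
  simp only [Matrix.cons_val_zero, Matrix.cons_val_one, Matrix.cons_val, mul_zero, zero_mul,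
    add_zero, sub_zero]
  ring

theorem exists_blochForm_eq_sq_norm_of_norm_eq {T : ℝ} {m : EuclideanSpace ℝ (Fin 3)}
    (hm : ‖m‖ = T / 2) : ∃ z₁ z₂ : ℂ, ‖z₁‖ ^ 2 + ‖z₂‖ ^ 2 = T ∧
      ∀ a b, blochForm T m a b = ‖z₁ * a + z₂ * b‖ ^ 2 := by
  have hsq : m 0 ^ 2 + m 1 ^ 2 + m 2 ^ 2 = (T / 2) ^ 2 := by
    rw [← hm, EuclideanSpace.real_norm_sq_eq, Fin.sum_univ_three]
  have hT : 0 ≤ T / 2 := hm ▸ norm_nonneg m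
  obtain ⟨hP, hQ⟩ : 0 ≤ T / 2 + m 0 ∧ 0 ≤ T / 2 - m 0 := by
    constructor <;> nlinarith [sq_nonneg (m 1), sq_nonneg (m 2)]
  obtain ⟨z₁, z₂, hz₁, hz₂, hw⟩ := exists_sq_norm_eq_mul_conj_eq hP hQ
    (w := ⟨m 1, m 2⟩) (by rw [Complex.sq_norm, normSq_mk]; linarith)
  refine ⟨z₁, z₂, by linarith, fun a b => ?_⟩
  have hcross : (z₁ * a * conj (z₂ * b)).re = m 1 * (a * conj b).re - m 2 * (a * conj b).im := by
    rw [map_mul, show z₁ * a * (conj z₂ * conj b) = z₁ * conj z₂ * (a * conj b) by ring, hw,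
      mul_re]
  simp only [Complex.sq_norm] at hz₁ hz₂ ⊢
  rw [normSq_add, hcross, normSq_mul, normSq_mul, hz₁, hz₂, blochForm_eq, Complex.sq_norm,
    Complex.sq_norm]
  ring

theorem exists_weighted_sq_norm_le_sq_norm_mul_add {p q : ℝ} (hp : 0 ≤ p) (hq : 0 ≤ q)
    (a b : Fin 3 → ℂ) : ∃ z₁ z₂ : ℂ, ‖z₁‖ ^ 2 + ‖z₂‖ ^ 2 = p + q ∧
      ∀ j, p * ‖a j‖ ^ 2 + q * ‖b j‖ ^ 2 ≤ ‖z₁ * a j + z₂ * b j‖ ^ 2 := by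
  obtain ⟨v, hv, hv_nonneg⟩ := exists_ne_zero_forall_nonneg_of_card_le_finrank
    (V := EuclideanSpace ℝ (Fin 3)) (by simp) fun j => innerₗ _ (blochVec (a j) (b j))
  have hstart : ‖!₂[(p - q) / 2, 0, 0]‖ ≤ (p + q) / 2 := by
    rw [← sq_le_sq₀ (norm_nonneg _) (by positivity), EuclideanSpace.real_norm_sq_eq,
      Fin.sum_univ_three]
    simp only [Matrix.cons_val_zero, Matrix.cons_val_one, Matrix.cons_val]
    nlinarith
  obtain ⟨t, ht, hnorm⟩ := exists_nonneg_norm_add_smul_eq_s7 hstart hv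
  obtain ⟨z₁, z₂, hz, hform⟩ := exists_blochForm_eq_sq_norm_of_norm_eq hnorm
  refine ⟨z₁, z₂, hz, fun j => ?_⟩
  have hdir : 0 ≤ ⟪blochVec (a j) (b j), v⟫_ℝ := hv_nonneg j
  rw [← hform, ← blochForm_diagonal, blochForm, blochForm, inner_add_right, inner_smul_right]
  nlinarith [mul_nonneg ht hdir]

end Complex

section InnerProductSpace

variable {E : Type*} [NormedAddCommGroup E] [InnerProductSpace ℂ E]

open Complex

theorem exists_mem_span_pair_sq_norm_inner_le {w w' : E} (h : ⟪w, w'⟫_ℂ = 0) (ψ : Fin 3 → E) :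
    ∃ u ∈ Submodule.span ℂ {w, w'}, ‖u‖ ^ 2 = ‖w‖ ^ 2 + ‖w'‖ ^ 2 ∧
      ∀ j, ‖⟪w, ψ j⟫_ℂ‖ ^ 2 + ‖⟪w', ψ j⟫_ℂ‖ ^ 2 ≤ ‖⟪u, ψ j⟫_ℂ‖ ^ 2 := by
  rcases eq_or_ne w 0 with rfl | hw
  · exact ⟨w', Submodule.subset_span (by simp), by simp, fun j => by simp⟩
  rcases eq_or_ne w' 0 with rfl | hw'
  · exact ⟨w, Submodule.subset_span (by simp), by simp, fun j => by simp⟩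
  have hunit {x : E} (hx : x ≠ 0) : ∃ e ∈ Submodule.span ℂ {x}, ‖e‖ = 1 ∧ x = (‖x‖ : ℂ) • e :=
    ⟨(‖x‖⁻¹ : ℂ) • x, Submodule.smul_mem _ _ (Submodule.mem_span_singleton_self x),
      norm_smul_inv_norm hx, by rw [smul_smul, mul_inv_cancel₀ (by simpa using hx), one_smul]⟩
  obtain ⟨e, he_mem, he, hwe⟩ := hunit hw
  obtain ⟨f, hf_mem, hf, hwf⟩ := hunit hw'
  have hef : ⟪e, f⟫_ℂ = 0 := by
    rw [hwe, hwf, inner_smul_left, inner_smul_right] at h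
    simpa [hw, hw'] using h
  have hinner (r : ℝ) (x y : E) : ‖⟪(r : ℂ) • x, y⟫_ℂ‖ ^ 2 = r ^ 2 * ‖⟪x, y⟫_ℂ‖ ^ 2 := by
    rw [inner_smul_left, norm_mul, norm_conj, norm_real, mul_pow, Real.norm_eq_abs, sq_abs]
  have hwψ y : ‖⟪w, y⟫_ℂ‖ ^ 2 = ‖w‖ ^ 2 * ‖⟪e, y⟫_ℂ‖ ^ 2 := by rw [← hinner, ← hwe]
  have hw'ψ y : ‖⟪w', y⟫_ℂ‖ ^ 2 = ‖w'‖ ^ 2 * ‖⟪f, y⟫_ℂ‖ ^ 2 := by rw [← hinner, ← hwf]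
  obtain ⟨z₁, z₂, hz, hle⟩ := exists_weighted_sq_norm_le_sq_norm_mul_add (sq_nonneg ‖w‖)
    (sq_nonneg ‖w'‖) (fun j => ⟪e, ψ j⟫_ℂ) (fun j => ⟪f, ψ j⟫_ℂ)
  refine ⟨conj z₁ • e + conj z₂ • f, ?_, ?_, fun j => ?_⟩
  · exact Submodule.add_mem _
      (Submodule.smul_mem _ _ (Submodule.span_mono (by simp) he_mem))
      (Submodule.smul_mem _ _ (Submodule.span_mono (by simp) hf_mem))
  · rw [@norm_add_sq ℂ, inner_smul_left, inner_smul_right, hef, mul_zero, mul_zero, map_zero,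
      mul_zero, add_zero, norm_smul, norm_smul, he, hf, norm_conj, norm_conj, mul_one, mul_one, hz]
  · rw [hwψ, hw'ψ, inner_add_left, inner_smul_left, inner_smul_left, conj_conj, conj_conj]
    exact hle j

theorem exists_mem_span_sum_sq_norm_inner_le {ι : Type*} (w : ι → E)
    (hw : Pairwise fun k l => ⟪w k, w l⟫_ℂ = 0) (ψ : Fin 3 → E) (s : Finset ι) :
    ∃ u ∈ Submodule.span ℂ (w '' s), ‖u‖ ^ 2 = ∑ k ∈ s, ‖w k‖ ^ 2 ∧
      ∀ j, ∑ k ∈ s, ‖⟪w k, ψ j⟫_ℂ‖ ^ 2 ≤ ‖⟪u, ψ j⟫_ℂ‖ ^ 2 := by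
  classical
  induction s using Finset.induction_on with
  | empty => exact ⟨0, Submodule.zero_mem _, by simp, fun j => by simp⟩
  | insert k s hk ih =>
    obtain ⟨u, hu, hu_norm, hu_le⟩ := ih
    have horth : ⟪u, w k⟫_ℂ = 0 := by
      refine Submodule.IsOrtho.inner_eq (V := Submodule.span ℂ {w k}) ?_ hu
        (Submodule.mem_span_singleton_self _)
      rw [Submodule.isOrtho_span]
      rintro _ ⟨l, hl, rfl⟩ _ rfl
      exact hw (ne_of_mem_of_not_mem hl hk)
    obtain ⟨u', hu', hu'_norm, hu'_le⟩ := exists_mem_span_pair_sq_norm_inner_le horth ψ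
    refine ⟨u', ?_, ?_, fun j => ?_⟩
    · refine Submodule.span_le.mpr ?_ hu'
      rintro _ (rfl | rfl)
      · exact Submodule.span_mono (Set.image_mono (by simp)) hu
      · exact Submodule.subset_span ⟨k, by simp, rfl⟩
    · rw [Finset.sum_insert hk, hu'_norm, hu_norm, add_comm]
    · rw [Finset.sum_insert hk]
      linarith [hu_le j, hu'_le j]

end InnerProductSpace

open Matrix in
theorem Matrix.PosSemidef.exists_orthogonal_decomposition {𝕜 n : Type*} [RCLike 𝕜] [Fintype n]
    {A : Matrix n n 𝕜} (hA : A.PosSemidef) :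
    ∃ w : n → EuclideanSpace 𝕜 n, Pairwise (fun k l => ⟪w k, w l⟫_𝕜 = 0) ∧
      ∑ k, ‖w k‖ ^ 2 = RCLike.re A.trace ∧
      ∀ x : n → 𝕜, RCLike.re (star x ⬝ᵥ A *ᵥ x) = ∑ k, ‖⟪w k, WithLp.toLp 2 x⟫_𝕜‖ ^ 2 := by
  classical
  set e := hA.1.eigenvectorBasis
  have hev k : Real.sqrt (hA.1.eigenvalues k) ^ 2 = hA.1.eigenvalues k :=
    Real.sq_sqrt (hA.eigenvalues_nonneg k)
  refine ⟨fun k => (Real.sqrt (hA.1.eigenvalues k) : 𝕜) • e k, fun k l hkl => ?_, ?_, fun x => ?_⟩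
  · dsimp only
    rw [inner_smul_left, inner_smul_right, e.orthonormal.2 hkl, mul_zero, mul_zero]
  · simp [norm_smul, e.orthonormal.1, hev, hA.1.trace_eq_sum_eigenvalues]
  · set c := fun k => ⟪e k, WithLp.toLp 2 x⟫_𝕜
    have hAx : A *ᵥ x = ∑ k, c k • hA.1.eigenvalues k • (e k).ofLp := by
      have hx : x = (WithLp.toLp 2 x).ofLp := rfl
      rw [hx, ← e.sum_repr' (WithLp.toLp 2 x)]
      have hAe : ∀ k, A *ᵥ (e k).ofLp = hA.1.eigenvalues k • (e k).ofLp :=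
        hA.1.mulVec_eigenvectorBasis
      simp [mulVec_sum, mulVec_smul, hAe, c]
    have hdot k : star x ⬝ᵥ (e k).ofLp = conj (c k) := by
      rw [star_dotProduct, dotProduct_comm]
      rfl
    rw [hAx, dotProduct_sum, map_sum]
    refine Finset.sum_congr rfl fun k _ => ?_
    dsimp only
    rw [dotProduct_smul, dotProduct_smul, hdot, inner_smul_left, norm_mul,
      RCLike.norm_conj, mul_pow, RCLike.norm_ofReal, sq_abs, hev, smul_eq_mul,
      RCLike.real_smul_eq_coe_mul, mul_left_comm, RCLike.mul_conj, RCLike.re_ofReal_mul]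
    norm_cast

open Matrix in
theorem Matrix.PosSemidef.exists_sq_norm_eq_trace_and_le_sq_norm_inner {n : Type*} [Fintype n]
    {ρ : Matrix n n ℂ} (hρ : ρ.PosSemidef) (ψ : Fin 3 → n → ℂ) :
    ∃ u : EuclideanSpace ℂ n, ‖u‖ ^ 2 = ρ.trace.re ∧
      ∀ j, (star (ψ j) ⬝ᵥ ρ *ᵥ ψ j).re ≤ ‖⟪u, WithLp.toLp 2 (ψ j)⟫_ℂ‖ ^ 2 := by
  obtain ⟨w, horth, hw_norm, hform⟩ := hρ.exists_orthogonal_decomposition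
  obtain ⟨u, -, hu, hdom⟩ :=
    exists_mem_span_sum_sq_norm_inner_le w horth (fun j => WithLp.toLp 2 (ψ j)) Finset.univ
  exact ⟨u, hu.trans hw_norm, fun j => (hform (ψ j)).trans_le (hdom j)⟩

theorem inp_eq_inner {d : ℕ} (x y : Fin d → ℂ) :
    inp x y = ⟪WithLp.toLp 2 x, WithLp.toLp 2 y⟫_ℂ := by
  simp [inp, EuclideanSpace.inner_toLp_toLp, dotProduct, mul_comm]

theorem stmt7_general (d : ℕ) (hd : 1 ≤ d)
    (ψ : Fin 3 → (Fin d → ℂ))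
    (n : Fin 3 → ℕ) :
    ∃ φ : Fin d → ℂ, inp φ φ = 1 ∧
      ∀ ρ : Matrix (Fin d) (Fin d) ℂ, ρ.PosSemidef → ρ.trace = 1 →
        ∏ j, (dotProduct (star (ψ j)) (ρ.mulVec (ψ j))).re ^ (n j)
          ≤ ∏ j, ‖inp φ (ψ j)‖ ^ (2 * n j) := by
  have : Nonempty (Fin d) := ⟨⟨0, hd⟩⟩
  set L : EuclideanSpace ℂ (Fin d) → ℝ := fun x => ∏ j, ‖⟪x, WithLp.toLp 2 (ψ j)⟫_ℂ‖ ^ (2 * n j)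
  obtain ⟨φ, hφ, hmax⟩ := (isCompact_sphere (0 : EuclideanSpace ℂ (Fin d)) 1).exists_isMaxOn
    (NormedSpace.sphere_nonempty.mpr zero_le_one) (by fun_prop : Continuous L).continuousOn
  refine ⟨φ.ofLp, ?_, fun ρ hρ htr => ?_⟩
  · rw [inp_eq_inner, inner_self_eq_norm_sq_to_K, mem_sphere_zero_iff_norm.mp hφ]
    simp
  obtain ⟨u, hu, hdom⟩ := hρ.exists_sq_norm_eq_trace_and_le_sq_norm_inner ψ
  have hu1 : u ∈ Metric.sphere 0 1 := by
    rw [mem_sphere_zero_iff_norm, ← pow_eq_one_iff_of_nonneg (norm_nonneg u) two_ne_zero, hu,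
      htr, Complex.one_re]
  calc ∏ j, (dotProduct (star (ψ j)) (ρ.mulVec (ψ j))).re ^ (n j) ≤ L u := by
        refine Finset.prod_le_prod (fun j _ => pow_nonneg (hρ.re_dotProduct_nonneg (ψ j)) _)
          (fun j _ => ?_)
        rw [pow_mul]
        exact pow_le_pow_left₀ (hρ.re_dotProduct_nonneg (ψ j)) (hdom j) _
    _ ≤ L φ := hmax hu1
    _ = ∏ j, ‖inp φ.ofLp (ψ j)‖ ^ (2 * n j) := by simp [L, inp_eq_inner]

theorem stmt7 (d : ℕ) (hd : 1 ≤ d)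
    (ψ : Fin 3 → (Fin d → ℂ)) (hψ : ∀ j, inp (ψ j) (ψ j) = 1)
    (n : Fin 3 → ℕ) :
    ∃ φ : Fin d → ℂ, inp φ φ = 1 ∧
      ∀ ρ : Matrix (Fin d) (Fin d) ℂ, ρ.PosSemidef → ρ.trace = 1 →
        ∏ j, (dotProduct (star (ψ j)) (ρ.mulVec (ψ j))).re ^ (n j)
          ≤ ∏ j, ‖inp φ (ψ j)‖ ^ (2 * n j) :=
  stmt7_general d hd ψ n
end

section
/- Let θ ∈ ℝ with sin θ ≠ 0. In ℂ² with standard basis e₀, e₁, set θ₊ := cos(θ/2)·e₀ + sin(θ/2)·e₁ and θ₋ := sin(θ/2)·e₀ − cos(θ/2)·e₁. Let f₀₀, f₀₁, f₁₀, f₁₁ ∈ [0,1] with f₀₀ + f₀₁ = 1 and f₁₀ + f₁₁ = 1, and set h₀ := f₀₀ − f₀₁ and h₁ := f₁₀ − f₁₁. Then there exists a unit vector φ ∈ ℂ² with |⟨φ, e₀⟩|² = f₀₀, |⟨φ, e₁⟩|² = f₀₁, |⟨φ, θ₊⟩|² = f₁₀ and |⟨φ, θ₋⟩|² = f₁₁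 if and only if h₀² + h₁² − 2 h₀ h₁ cos θ ≤ sin² θ. -/
/-!
For a vector `φ` of `ℂ²` put `x = 2 Re (conj φ₀ φ₁)` and `z = ‖φ₀‖² - ‖φ₁‖²`: these are two
coordinates of its Bloch vector, and as `φ` runs over the unit vectors, `(x, z)` fills exactly
the closed unit disc. The measurement in the basis `e₀, e₁` fixes `z = h₀`, and by the half-angle
formulas the one in the basis `θ₊, θ₋` gives `h₁ = h₀ cos θ + x sin θ`. Since `sin θ ≠ 0` this
determines `x = (h₁ - h₀ cos θ) / sin θ`, and the disc condition `x² + h₀² ≤ 1`, multiplied by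
`sin² θ`, is the stated inequality.
-/

open scoped BigOperators

open ComplexConjugate

lemma cos_eq_cos_half_sq_sub_sin_half_sq (θ : ℝ) :
    Real.cos θ = Real.cos (θ / 2) ^ 2 - Real.sin (θ / 2) ^ 2 := by
  rw [← Real.cos_two_mul', mul_div_cancel₀ θ two_ne_zero]

lemma sin_eq_two_mul_sin_half_mul_cos_half (θ : ℝ) :
    Real.sin θ = 2 * Real.sin (θ / 2) * Real.cos (θ / 2) := by
  rw [← Real.sin_two_mul, mul_div_cancel₀ θ two_ne_zero]

/-- The `x`-coordinate of the Bloch vector of `φ`; its `z`-coordinate is `‖φ 0‖ ^ 2 - ‖φ 1‖ ^ 2`. -/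
noncomputable def blochX (φ : Fin 2 → ℂ) : ℝ := 2 * (conj (φ 0) * φ 1).re

lemma norm_sq_inp_ofReal (φ : Fin 2 → ℂ) (u v : ℝ) :
    ‖inp φ ![(u : ℂ), (v : ℂ)]‖ ^ 2 = u ^ 2 * ‖φ 0‖ ^ 2 + v ^ 2 * ‖φ 1‖ ^ 2 + u * v * blochX φ := by
  simp only [inp, blochX, Fin.sum_univ_two, Complex.sq_norm, Complex.normSq_apply, Complex.add_re,
    Complex.add_im, Complex.mul_re, Complex.mul_im, Complex.conj_re, Complex.conj_im,
    Complex.ofReal_re, Complex.ofReal_im, Matrix.cons_val_zero, Matrix.cons_val_one]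
  ring

lemma inp_self_fin_two (φ : Fin 2 → ℂ) : inp φ φ = ((‖φ 0‖ ^ 2 + ‖φ 1‖ ^ 2 : ℝ) : ℂ) := by
  simp [inp, Fin.sum_univ_two, Complex.conj_mul']

lemma norm_sq_inp_single_zero (φ : Fin 2 → ℂ) : ‖inp φ ![1, 0]‖ ^ 2 = ‖φ 0‖ ^ 2 := by
  simpa using norm_sq_inp_ofReal φ 1 0

lemma norm_sq_inp_single_one (φ : Fin 2 → ℂ) : ‖inp φ ![0, 1]‖ ^ 2 = ‖φ 1‖ ^ 2 := by
  simpa using norm_sq_inp_ofReal φ 0 1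

lemma norm_sq_inp_cos_half_sin_half (θ : ℝ) (φ : Fin 2 → ℂ) :
    ‖inp φ ![(Real.cos (θ / 2) : ℂ), (Real.sin (θ / 2) : ℂ)]‖ ^ 2 =
      (‖φ 0‖ ^ 2 + ‖φ 1‖ ^ 2 + Real.cos θ * (‖φ 0‖ ^ 2 - ‖φ 1‖ ^ 2)
        + Real.sin θ * blochX φ) / 2 := by
  rw [norm_sq_inp_ofReal, cos_eq_cos_half_sq_sub_sin_half_sq θ,
    sin_eq_two_mul_sin_half_mul_cos_half θ]
  linear_combination (‖φ 0‖ ^ 2 + ‖φ 1‖ ^ 2) / 2 * Real.sin_sq_add_cos_sq (θ / 2)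

lemma norm_sq_inp_sin_half_neg_cos_half (θ : ℝ) (φ : Fin 2 → ℂ) :
    ‖inp φ ![(Real.sin (θ / 2) : ℂ), -(Real.cos (θ / 2) : ℂ)]‖ ^ 2 =
      (‖φ 0‖ ^ 2 + ‖φ 1‖ ^ 2 - Real.cos θ * (‖φ 0‖ ^ 2 - ‖φ 1‖ ^ 2)
        - Real.sin θ * blochX φ) / 2 := by
  rw [← Complex.ofReal_neg, norm_sq_inp_ofReal, cos_eq_cos_half_sq_sub_sin_half_sq θ,
    sin_eq_two_mul_sin_half_mul_cos_half θ]
  linear_combination (‖φ 0‖ ^ 2 + ‖φ 1‖ ^ 2) / 2 * Real.sin_sq_add_cos_sq (θ / 2)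

lemma blochX_sq_add_sq_le (φ : Fin 2 → ℂ) :
    blochX φ ^ 2 + (‖φ 0‖ ^ 2 - ‖φ 1‖ ^ 2) ^ 2 ≤ (‖φ 0‖ ^ 2 + ‖φ 1‖ ^ 2) ^ 2 := by
  have h := Complex.abs_re_le_norm (conj (φ 0) * φ 1)
  rw [norm_mul, Complex.norm_conj] at h
  have := sq_le_sq' (abs_le.mp h).1 (abs_le.mp h).2
  rw [blochX]
  nlinarith

lemma exists_blochX_of_sq_le {p₀ p₁ x : ℝ} (hp₀ : 0 ≤ p₀) (hp₁ : 0 ≤ p₁)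
    (hx : x ^ 2 ≤ 4 * p₀ * p₁) :
    ∃ φ : Fin 2 → ℂ, ‖φ 0‖ ^ 2 = p₀ ∧ ‖φ 1‖ ^ 2 = p₁ ∧ blochX φ = x := by
  set a := x / (2 * √p₀)
  have ha : a ^ 2 ≤ p₁ := by
    rw [div_pow, mul_pow, Real.sq_sqrt hp₀]
    exact div_le_of_le_mul₀ (by positivity) hp₁ (by linarith)
  have hxa : 2 * √p₀ * a = x := by
    -- for `p₀ = 0` the junk value `a = x / 0 = 0` works, because then `x = 0`
    rcases eq_or_ne p₀ 0 with h | h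
    · have : x = 0 := by simpa [h] using hx
      simp [a, h, this]
    · exact mul_div_cancel₀ x (by positivity)
  refine ⟨![(√p₀ : ℂ), a + √(p₁ - a ^ 2) * Complex.I], ?_, ?_, ?_⟩
  · simp [Real.sq_sqrt hp₀]
  · simp [Complex.sq_norm, Complex.normSq_apply, ← sq, Real.sq_sqrt (sub_nonneg.mpr ha)]
  · simpa [blochX, mul_assoc] using hxa

lemma exists_blochX_of_sq_add_sq_le {x z : ℝ} (h : x ^ 2 + z ^ 2 ≤ 1) :
    ∃ φ : Fin 2 → ℂ, ‖φ 0‖ ^ 2 = (1 + z) / 2 ∧ ‖φ 1‖ ^ 2 = (1 - z) / 2 ∧ blochX φ = x := by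
  obtain ⟨hz₁, hz₂⟩ := abs_le.mp ((sq_le_one_iff_abs_le_one z).mp (by nlinarith))
  exact exists_blochX_of_sq_le (by linarith) (by linarith) (by linarith)

lemma sq_add_sq_sub_two_mul_mul_cos (θ h₀ x : ℝ) :
    h₀ ^ 2 + (h₀ * Real.cos θ + x * Real.sin θ) ^ 2
        - 2 * h₀ * (h₀ * Real.cos θ + x * Real.sin θ) * Real.cos θ =
      Real.sin θ ^ 2 * (x ^ 2 + h₀ ^ 2) := by
  linear_combination -h₀ ^ 2 * Real.sin_sq_add_cos_sq θ

lemma exists_sq_add_sq_le_one_iff {θ h₀ h₁ : ℝ} (hθ : Real.sin θ ≠ 0) :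
    (∃ x : ℝ, x ^ 2 + h₀ ^ 2 ≤ 1 ∧ h₁ = h₀ * Real.cos θ + x * Real.sin θ) ↔
      h₀ ^ 2 + h₁ ^ 2 - 2 * h₀ * h₁ * Real.cos θ ≤ Real.sin θ ^ 2 := by
  constructor
  · rintro ⟨x, hx, rfl⟩
    rw [sq_add_sq_sub_two_mul_mul_cos]
    exact mul_le_of_le_one_right (sq_nonneg _) hx
  · intro h
    refine ⟨(h₁ - h₀ * Real.cos θ) / Real.sin θ, ?_, by field_simp; ring⟩
    have key := sq_add_sq_sub_two_mul_mul_cos θ h₀ ((h₁ - h₀ * Real.cos θ) / Real.sin θ)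
    rw [div_mul_cancel₀ _ hθ, add_sub_cancel] at key
    rw [key] at h
    exact (mul_le_iff_le_one_right (sq_pos_of_ne_zero hθ)).mp h

theorem stmt8_general (θ : ℝ) (hθ : Real.sin θ ≠ 0)
    (θp θm : Fin 2 → ℂ)
    (hθp : θp = ![(Real.cos (θ / 2) : ℂ), (Real.sin (θ / 2) : ℂ)])
    (hθm : θm = ![(Real.sin (θ / 2) : ℂ), -(Real.cos (θ / 2) : ℂ)])
    (f00 f01 f10 f11 : ℝ)
    (hsum0 : f00 + f01 = 1) (hsum1 : f10 + f11 = 1)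
    (h0 h1 : ℝ) (hh0 : h0 = f00 - f01) (hh1 : h1 = f10 - f11) :
    (∃ φ : Fin 2 → ℂ, inp φ φ = 1 ∧
        ‖inp φ ![1, 0]‖ ^ 2 = f00 ∧
        ‖inp φ ![0, 1]‖ ^ 2 = f01 ∧
        ‖inp φ θp‖ ^ 2 = f10 ∧
        ‖inp φ θm‖ ^ 2 = f11) ↔
      h0 ^ 2 + h1 ^ 2 - 2 * h0 * h1 * Real.cos θ ≤ Real.sin θ ^ 2 := by
  subst hθp hθm hh0 hh1
  simp only [inp_self_fin_two, Complex.ofReal_eq_one, norm_sq_inp_single_zero,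
    norm_sq_inp_single_one, norm_sq_inp_cos_half_sin_half, norm_sq_inp_sin_half_neg_cos_half]
  rw [← exists_sq_add_sq_le_one_iff hθ]
  constructor
  · rintro ⟨φ, hnorm, rfl, rfl, h10, h11⟩
    refine ⟨blochX φ, ?_, ?_⟩
    · simpa [hnorm] using blochX_sq_add_sq_le φ
    · rw [← h10, ← h11, hnorm]; ring
  · rintro ⟨x, hx, hh1⟩
    obtain ⟨φ, hφ₀, hφ₁, rfl⟩ := exists_blochX_of_sq_add_sq_le hx
    refine ⟨φ, ?_, ?_, ?_, ?_, ?_⟩ <;> simp only [hφ₀, hφ₁] <;> linarith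

theorem stmt8 (θ : ℝ) (hθ : Real.sin θ ≠ 0)
    (θp θm : Fin 2 → ℂ)
    (hθp : θp = ![(Real.cos (θ / 2) : ℂ), (Real.sin (θ / 2) : ℂ)])
    (hθm : θm = ![(Real.sin (θ / 2) : ℂ), -(Real.cos (θ / 2) : ℂ)])
    (f00 f01 f10 f11 : ℝ)
    (hf00 : f00 ∈ Set.Icc (0 : ℝ) 1) (hf01 : f01 ∈ Set.Icc (0 : ℝ) 1)
    (hf10 : f10 ∈ Set.Icc (0 : ℝ) 1) (hf11 : f11 ∈ Set.Icc (0 : ℝ) 1)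
    (hsum0 : f00 + f01 = 1) (hsum1 : f10 + f11 = 1)
    (h0 h1 : ℝ) (hh0 : h0 = f00 - f01) (hh1 : h1 = f10 - f11) :
    (∃ φ : Fin 2 → ℂ, inp φ φ = 1 ∧
        ‖inp φ ![1, 0]‖ ^ 2 = f00 ∧
        ‖inp φ ![0, 1]‖ ^ 2 = f01 ∧
        ‖inp φ θp‖ ^ 2 = f10 ∧
        ‖inp φ θm‖ ^ 2 = f11) ↔
      h0 ^ 2 + h1 ^ 2 - 2 * h0 * h1 * Real.cos θ ≤ Real.sin θ ^ 2 :=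
  stmt8_general θ hθ θp θm hθp hθm f00 f01 f10 f11 hsum0 hsum1 h0 h1 hh0 hh1
end

section
/- Let d ≥ 1, ω := exp(2πi/d), and let Z and X be the d×d complex matrices determined by Z e_k = ω^k e_k and X e_k = e_{(k+1) mod d} on the standard basis (e_k)_{k=0}^{d−1} of ℂ^d. Let v ∈ ℂ^d be a nonzero eigenvector of XZ. Then |v_k|² = ‖v‖²/d for every k = 0, …, d−1, and moreover |⟨f_k, v⟩|² = ‖v‖²/d for every k, where f_k := (1/√d)·(ω^{jk})_{j=0}^{d−1} is the k-th discrete Fourier basis vector (the eigenbasis of X). In other words, every eigenstate of XZ is mutually unbiased with both the eigenbasis of Z and the eigenbasis of X. -/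
/-!
Since `(X Z v)_{j+1} = ω^j v_j`, the eigen-equation is the cyclic recurrence `μ v_{j+1} = ω^j v_j`.
Taking norms and summing over the cycle gives `‖μ‖ ∑ ‖v_j‖ = ∑ ‖v_j‖`, so `‖μ‖ = 1` unless `v = 0`,
and then `‖v_j‖` is constant along the cycle. The Fourier coefficients `⟨f_k, v⟩` satisfy a
recurrence of the same shape, `μ ⟨f_{k+1}, v⟩ = conj ω^{k+1} ⟨f_k, v⟩` (the Fourier transform
exchanges the roles of `X` and `Z`), so they also have constant modulus; Parseval for the
orthonormal basis `(f_k)` then fixes that modulus.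
-/

open scoped BigOperators

open Fin.NatCast ComplexConjugate Matrix

namespace Fin

variable {d : ℕ} [NeZero d]

lemma val_add_one_eq_mod (j : Fin d) : ((j + 1 : Fin d) : ℕ) = ((j : ℕ) + 1) % d := by
  rw [Fin.val_add, Fin.val_one', Nat.add_mod_mod]

lemma val_eq_val_add_one_mod_iff {i j : Fin d} : (i : ℕ) = ((j : ℕ) + 1) % d ↔ i = j + 1 := by
  rw [← val_add_one_eq_mod, Fin.val_inj]

lemma apply_eq_apply_zero_of_apply_add_one {α : Type*} {g : Fin d → α}
    (h : ∀ j, g (j + 1) = g j) (i : Fin d) : g i = g 0 := by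
  have key (n : ℕ) : g n = g 0 := by
    induction n with
    | zero => simp
    | succ n ih => rw [Nat.cast_succ, h, ih]
  simpa using key i

end Fin

section Shift

variable {R : Type*} [CommSemiring R]

def shiftMatrix (d : ℕ) : Matrix (Fin d) (Fin d) R :=
  Matrix.of fun i j : Fin d => if (i : ℕ) = ((j : ℕ) + 1) % d then 1 else 0

lemma shiftMatrix_mul_diagonal_mulVec_apply_add_one {d : ℕ} [NeZero d] (w v : Fin d → R)
    (j : Fin d) : ((shiftMatrix d * diagonal w) *ᵥ v) (j + 1) = w j * v j := by
  simp [shiftMatrix, mulVec, dotProduct, mul_diagonal, Fin.val_eq_val_add_one_mod_iff]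

end Shift

lemma norm_apply_eq_norm_apply_zero_of_mul_apply_add_one {d : ℕ} [NeZero d] {a u : Fin d → ℂ}
    {μ : ℂ} (hu : ∀ j, ‖u j‖ = 1) (h : ∀ j, μ * a (j + 1) = u j * a j) (i : Fin d) :
    ‖a i‖ = ‖a 0‖ := by
  have hnorm (j : Fin d) : ‖μ‖ * ‖a (j + 1)‖ = ‖a j‖ := by
    simpa [hu] using congrArg norm (h j)
  have hsum : ‖μ‖ * ∑ j, ‖a j‖ = ∑ j, ‖a j‖ := calc
    ‖μ‖ * ∑ j, ‖a j‖ = ∑ j, ‖μ‖ * ‖a (j + 1)‖ := by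
      rw [Finset.mul_sum, ← Equiv.sum_comp (Equiv.addRight 1)]; rfl
    _ = ∑ j, ‖a j‖ := Finset.sum_congr rfl fun j _ => hnorm j
  by_cases hzero : ∑ j, ‖a j‖ = 0
  · have hall := (Finset.sum_eq_zero_iff_of_nonneg fun j _ => norm_nonneg (a j)).1 hzero
    simp [hall]
  · have hμ : ‖μ‖ = 1 := by
      simpa [hzero] using mul_right_cancel₀ hzero (hsum.trans (one_mul _).symm)
    refine Fin.apply_eq_apply_zero_of_apply_add_one (g := fun j => ‖a j‖) (fun j => ?_) i
    simpa [hμ] using hnorm j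

lemma norm_sq_eq_sum_div_of_mul_apply_add_one {d : ℕ} [NeZero d] {a u : Fin d → ℂ} {μ : ℂ}
    (hu : ∀ j, ‖u j‖ = 1) (h : ∀ j, μ * a (j + 1) = u j * a j) (k : Fin d) :
    ‖a k‖ ^ 2 = (∑ i, ‖a i‖ ^ 2) / d := by
  have hconst := norm_apply_eq_norm_apply_zero_of_mul_apply_add_one hu h
  simp only [hconst, Finset.sum_const, Finset.card_univ, Fintype.card_fin, nsmul_eq_mul]
  exact (mul_div_cancel_left₀ _ (Nat.cast_ne_zero.2 (NeZero.ne d))).symm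

lemma sum_fin_pow_eq_ite {K : Type*} [Field K] [DecidableEq K] {d : ℕ} {x : K} (hx : x ^ d = 1) :
    ∑ j : Fin d, x ^ (j : ℕ) = if x = 1 then (d : K) else 0 := by
  rw [Fin.sum_univ_eq_sum_range (x ^ ·)]
  split_ifs with h
  · simp [h]
  · rw [geom_sum_eq h, hx, sub_self, zero_div]

lemma conj_pow_mul_pow_eq_one_of_norm_eq_one {ω : ℂ} (hnorm : ‖ω‖ = 1) (n : ℕ) :
    conj ω ^ n * ω ^ n = 1 := by
  rw [← mul_pow, Complex.conj_mul', hnorm, Complex.ofReal_one, one_pow, one_pow]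

lemma conj_pow_mul_pow_eq_one_iff {d : ℕ} {ω : ℂ} (hω : IsPrimitiveRoot ω d) (hnorm : ‖ω‖ = 1)
    (k l : Fin d) : conj ω ^ (k : ℕ) * ω ^ (l : ℕ) = 1 ↔ k = l := by
  have hunit := conj_pow_mul_pow_eq_one_of_norm_eq_one hnorm
  constructor
  · intro h
    have hne : conj ω ^ (k : ℕ) ≠ 0 := left_ne_zero_of_mul_eq_one (hunit k)
    exact Fin.ext (hω.pow_inj k.isLt l.isLt (mul_left_cancel₀ hne ((hunit k).trans h.symm)))
  · rintro rfl
    exact hunit k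

noncomputable def fourierVec (d : ℕ) (ω : ℂ) (k : Fin d) : Fin d → ℂ :=
  fun j => (1 / (Real.sqrt d : ℂ)) * ω ^ ((j : ℕ) * (k : ℕ))

lemma inp_fourierVec_fourierVec {d : ℕ} {ω : ℂ} (hω : IsPrimitiveRoot ω d) (hnorm : ‖ω‖ = 1)
    (k l : Fin d) : inp (fourierVec d ω k) (fourierVec d ω l) = if k = l then 1 else 0 := by
  have hd : (d : ℂ) ≠ 0 := Nat.cast_ne_zero.2 k.pos.ne'
  have hx : (conj ω ^ (k : ℕ) * ω ^ (l : ℕ)) ^ d = 1 := by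
    rw [mul_pow, ← pow_mul, ← pow_mul, mul_comm _ d, mul_comm _ d, pow_mul, pow_mul,
      ← map_pow, hω.pow_eq_one]; simp
  have hsqrt : conj (1 / (Real.sqrt d : ℂ)) * (1 / (Real.sqrt d : ℂ)) = 1 / d := by
    rw [map_div₀, map_one, Complex.conj_ofReal, div_mul_div_comm, one_mul, ← Complex.ofReal_mul,
      Real.mul_self_sqrt (Nat.cast_nonneg d), Complex.ofReal_natCast]
  calc inp (fourierVec d ω k) (fourierVec d ω l)
      = conj (1 / (Real.sqrt d : ℂ)) * (1 / (Real.sqrt d : ℂ)) *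
          ∑ j : Fin d, (conj ω ^ (k : ℕ) * ω ^ (l : ℕ)) ^ (j : ℕ) := by
        simp only [inp, fourierVec, Finset.mul_sum, map_mul, map_pow, mul_pow, ← pow_mul]
        refine Finset.sum_congr rfl fun j _ => ?_
        ring
    _ = if k = l then 1 else 0 := by
        rw [hsqrt, sum_fin_pow_eq_ite hx]
        simp only [conj_pow_mul_pow_eq_one_iff hω hnorm]
        split_ifs <;> simp [hd]

lemma sum_norm_sq_inp_of_orthonormal {d : ℕ} {f : Fin d → Fin d → ℂ}
    (hf : ∀ k l, inp (f k) (f l) = if k = l then 1 else 0) (v : Fin d → ℂ) :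
    ∑ k, ‖inp (f k) v‖ ^ 2 = ∑ i, ‖v i‖ ^ 2 := by
  have hinner (φ ψ : Fin d → ℂ) : inp φ ψ = inner ℂ (WithLp.toLp 2 φ) (WithLp.toLp 2 ψ) := by
    simp [inp, EuclideanSpace.inner_toLp_toLp, dotProduct, mul_comm]
  have hon : Orthonormal ℂ fun k => WithLp.toLp 2 (f k) :=
    orthonormal_iff_ite.2 fun k l => by rw [← hinner, hf]
  have hspan := hon.linearIndependent.span_eq_top_of_card_eq_finrank' (by simp)
  have := (OrthonormalBasis.mk hon hspan.ge).sum_sq_norm_inner_right (WithLp.toLp 2 v)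
  simpa [hinner, EuclideanSpace.norm_sq_eq] using this

lemma mul_inp_fourierVec_add_one {d : ℕ} [NeZero d] {ω μ : ℂ} (hωd : ω ^ d = 1)
    (hnorm : ‖ω‖ = 1) {v : Fin d → ℂ} (hv : ∀ j : Fin d, μ * v (j + 1) = ω ^ (j : ℕ) * v j)
    (k : Fin d) :
    μ * inp (fourierVec d ω (k + 1)) v = conj ω ^ ((k : ℕ) + 1) * inp (fourierVec d ω k) v := by
  have hphase (j : Fin d) : ω ^ (((j + 1 : Fin d) : ℕ) * ((k + 1 : Fin d) : ℕ)) =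
      ω ^ ((j : ℕ) * k) * ω ^ (j : ℕ) * ω ^ ((k : ℕ) + 1) := by
    rw [pow_eq_pow_mod _ hωd, Nat.mul_mod, Fin.val_add_one_eq_mod, Fin.val_add_one_eq_mod,
      Nat.mod_mod, Nat.mod_mod, ← Nat.mul_mod, ← pow_eq_pow_mod _ hωd, ← pow_add, ← pow_add]
    ring_nf
  have hunit (j : Fin d) : conj ω ^ (j : ℕ) * ω ^ (j : ℕ) = 1 :=
    conj_pow_mul_pow_eq_one_of_norm_eq_one hnorm j
  calc μ * inp (fourierVec d ω (k + 1)) v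
      = ∑ j, conj (fourierVec d ω (k + 1) (j + 1)) * (μ * v (j + 1)) := by
        rw [inp, Finset.mul_sum, ← Equiv.sum_comp (Equiv.addRight 1)]
        exact Finset.sum_congr rfl fun j _ => mul_left_comm _ _ _
    _ = ∑ j, conj ω ^ ((k : ℕ) + 1) * (conj (fourierVec d ω k j) * v j) := by
        refine Finset.sum_congr rfl fun j _ => ?_
        simp only [hv j, fourierVec, hphase j, map_mul, map_pow]
        linear_combination
          conj (1 / (Real.sqrt d : ℂ)) * conj ω ^ ((j : ℕ) * k) * conj ω ^ ((k : ℕ) + 1) * v j *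
            hunit j
    _ = conj ω ^ ((k : ℕ) + 1) * inp (fourierVec d ω k) v := by rw [inp, Finset.mul_sum]

theorem stmt11_general (d : ℕ) (hd : 1 ≤ d)
    (ω : ℂ) (hω : ω = Complex.exp (2 * Real.pi * Complex.I / d))
    (Z X : Matrix (Fin d) (Fin d) ℂ)
    (hZ : Z = Matrix.diagonal (fun k : Fin d => ω ^ (k : ℕ)))
    (hX : X = Matrix.of (fun i j : Fin d =>
      if (i : ℕ) = ((j : ℕ) + 1) % d then 1 else 0))
    (v : Fin d → ℂ)
    (μ : ℂ) (heig : (X * Z).mulVec v = μ • v)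
    (f : Fin d → (Fin d → ℂ))
    (hf : f = fun (k : Fin d) => fun (j : Fin d) => (1 / (Real.sqrt d : ℂ)) * ω ^ ((j : ℕ) * (k : ℕ))) :
    (∀ k, ‖v k‖ ^ 2 = (∑ i, ‖v i‖ ^ 2) / d) ∧
      (∀ k, ‖inp (f k) v‖ ^ 2 = (∑ i, ‖v i‖ ^ 2) / d) := by
  have : NeZero d := ⟨by omega⟩
  have hprim : IsPrimitiveRoot ω d := hω ▸ Complex.isPrimitiveRoot_exp d (NeZero.ne d)
  have hnorm : ‖ω‖ = 1 := hprim.norm'_eq_one (NeZero.ne d)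
  have hrec (j : Fin d) : μ * v (j + 1) = ω ^ (j : ℕ) * v j := calc
    μ * v (j + 1) = ((X * Z) *ᵥ v) (j + 1) := by rw [heig, Pi.smul_apply, smul_eq_mul]
    _ = ω ^ (j : ℕ) * v j := by
      rw [hX, hZ]; exact shiftMatrix_mul_diagonal_mulVec_apply_add_one _ v j
  have hω_pow (j : Fin d) : ‖ω ^ (j : ℕ)‖ = 1 := by rw [norm_pow, hnorm, one_pow]
  have hconj_pow (k : Fin d) : ‖conj ω ^ ((k : ℕ) + 1)‖ = 1 := by
    rw [norm_pow, Complex.norm_conj, hnorm, one_pow]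
  obtain rfl : f = fourierVec d ω := hf
  refine ⟨norm_sq_eq_sum_div_of_mul_apply_add_one hω_pow hrec, fun k => ?_⟩
  rw [← sum_norm_sq_inp_of_orthonormal (inp_fourierVec_fourierVec hprim hnorm) v]
  exact norm_sq_eq_sum_div_of_mul_apply_add_one (a := fun k => inp (fourierVec d ω k) v) hconj_pow
    (mul_inp_fourierVec_add_one hprim.pow_eq_one hnorm hrec) k

theorem stmt11 (d : ℕ) (hd : 1 ≤ d)
    (ω : ℂ) (hω : ω = Complex.exp (2 * Real.pi * Complex.I / d))
    (Z X : Matrix (Fin d) (Fin d) ℂ)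
    (hZ : Z = Matrix.diagonal (fun k : Fin d => ω ^ (k : ℕ)))
    (hX : X = Matrix.of (fun i j : Fin d =>
      if (i : ℕ) = ((j : ℕ) + 1) % d then 1 else 0))
    (v : Fin d → ℂ) (hv : v ≠ 0)
    (μ : ℂ) (heig : (X * Z).mulVec v = μ • v)
    (f : Fin d → (Fin d → ℂ))
    (hf : f = fun (k : Fin d) => fun (j : Fin d) => (1 / (Real.sqrt d : ℂ)) * ω ^ ((j : ℕ) * (k : ℕ))) :
    (∀ k, ‖v k‖ ^ 2 = (∑ i, ‖v i‖ ^ 2) / d) ∧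
      (∀ k, ‖inp (f k) v‖ ^ 2 = (∑ i, ‖v i‖ ^ 2) / d) :=
  stmt11_general d hd ω hω Z X hZ hX v μ heig f hf
end

section
/- Let d ≥ 1 and let p₁, …, p_{d²} be real numbers with 0 ≤ p_j ≤ 1 for all j, Σ_{j=1}^{d²} p_j = d, and Σ_{j=1}^{d²} p_j² = 2d/(d+1). Then ∏_{j=1}^{d²} p_j ≤ (d+1)^{−(d²−1)}, with equality if and only if there is an index j₀ such that p_{j₀} = 1 and p_j = 1/(d+1) for all j ≠ j₀. -/
open scoped BigOperators

lemma two_log_le_aux {y : ℝ} (hy : 1 ≤ y) : 2 * Real.log y ≤ y - 1 / y := by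
  set f : ℝ → ℝ := fun x => x - x⁻¹ - 2 * Real.log x with hf
  have hd : ∀ x : ℝ, x ≠ 0 → HasDerivAt f (1 - -(x ^ 2)⁻¹ - 2 * x⁻¹) x := by
    intro x hx
    exact ((hasDerivAt_id x).sub (hasDerivAt_inv hx)).sub
      ((Real.hasDerivAt_log hx).const_mul 2)
  have key : MonotoneOn f (Set.Ici 1) := by
    apply monotoneOn_of_deriv_nonneg (convex_Ici 1)
    · intro x hx
      have hx0 : x ≠ 0 := by simp only [Set.mem_Ici] at hx; intro h; rw [h] at hx; linarith
      exact (hd x hx0).continuousAt.continuousWithinAt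
    · intro x hx
      rw [interior_Ici] at hx
      have hx0 : x ≠ 0 := by simp only [Set.mem_Ioi] at hx; intro h; rw [h] at hx; linarith
      exact (hd x hx0).differentiableAt.differentiableWithinAt
    · intro x hx
      rw [interior_Ici] at hx
      simp only [Set.mem_Ioi] at hx
      have hx0 : (0:ℝ) < x := by linarith
      rw [(hd x hx0.ne').deriv]
      have e : 1 - -(x ^ 2)⁻¹ - 2 * x⁻¹ = (x - 1) ^ 2 / x ^ 2 := by
        field_simp
        ring
      rw [e]
      positivity
  have h1 : f 1 ≤ f y := key (by simp) (by simpa using hy) hy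
  have hf1 : f 1 = 0 := by simp [hf]
  rw [hf1] at h1
  simp only [hf] at h1
  have : 1 / y = y⁻¹ := one_div y
  linarith

set_option maxHeartbeats 1000000 in
lemma key_exists (D : ℝ) (hD : 1 ≤ D) :
    ∃ lam mu c : ℝ,
      (lam * D + mu * (2 * D / (D + 1)) + c * D ^ 2
          = -(D ^ 2 - 1) * Real.log (D + 1)) ∧
      (∀ x : ℝ, 0 ≤ x → x ≤ 1 → x ≤ Real.exp (lam * x + mu * x ^ 2 + c)) ∧
      (∀ x : ℝ, 0 ≤ x → x ≤ 1 → x ≠ 1 / (D + 1) → x ≠ 1 →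
        x < Real.exp (lam * x + mu * x ^ 2 + c)) := by
  have hD0 : (0:ℝ) < D := by linarith
  have hD1 : (0:ℝ) < D + 1 := by linarith
  have hDne : D ≠ 0 := hD0.ne'
  have hD1ne : D + 1 ≠ 0 := hD1.ne'
  set L := Real.log (D + 1) with hL
  have hL2 : Real.log 2 ≤ L := by
    rw [hL]
    exact Real.log_le_log (by norm_num) (by linarith)
  have hLhalf : (1:ℝ)/2 < L := by
    have := Real.log_two_gt_d9
    linarith
  have hLD : L < D := by
    have h := Real.log_lt_sub_one_of_pos (x := D + 1) (by linarith) (by linarith)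
    rw [← hL] at h
    linarith
  set mu := (D + 1) ^ 2 * (L - D) / D ^ 2 with hmu
  have hmuneg : mu < 0 := by
    rw [hmu]
    apply div_neg_of_neg_of_pos
    · nlinarith
    · positivity
  have hmune : mu ≠ 0 := hmuneg.ne
  set lam := (D + 1) * L / D - mu * (D + 2) / (D + 1) with hlam
  set c := -lam - mu with hc
  set s := 1 / (D + 1) with hs
  set t := (D + 1) / (-(2 * mu)) with ht
  have h2mupos : (0:ℝ) < -(2 * mu) := by linarith
  have hs0 : 0 < s := by rw [hs]; positivity
  have hs1 : s < 1 := by rw [hs, div_lt_one hD1]; linarith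
  have hst : s < t := by
    rw [hs, ht, div_lt_div_iff₀ hD1 h2mupos]
    have e : -(2 * mu) = 2 * (D + 1) ^ 2 * (D - L) / D ^ 2 := by rw [hmu]; ring
    rw [e, one_mul]
    rw [div_lt_iff₀ (by positivity : (0:ℝ) < D ^ 2)]
    nlinarith [sq_nonneg (D - 1), sq_nonneg (D + 1), hLhalf, hD0]
  have ht1 : t ≤ 1 := by
    rw [ht, div_le_one h2mupos]
    have e : -(2 * mu) = 2 * (D + 1) ^ 2 * (D - L) / D ^ 2 := by rw [hmu]; ring
    rw [e, le_div_iff₀ (by positivity : (0:ℝ) < D ^ 2)]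
    have h2l := two_log_le_aux (y := D + 1) (by linarith)
    rw [← hL] at h2l
    have hinv : (D + 1) * (1 / (D + 1)) = 1 := by field_simp
    nlinarith [mul_le_mul_of_nonneg_right h2l hD1.le, hinv, hD1]
  have ht0 : 0 < t := lt_trans hs0 hst
  have h2mut : 2 * mu * t = -(D + 1) := by
    rw [ht]
    field_simp
  have hcrit : lam + 2 * mu * s = D + 1 := by
    rw [hlam, hmu, hs]
    field_simp
    ring
  have hDs : (D + 1) * s = 1 := by rw [hs]; field_simp
  have hfact : ∀ x : ℝ, 2 * mu * x ^ 2 + lam * x - 1 = 2 * mu * (x - s) * (x - t) := by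
    intro x
    have e1 : 2 * mu * (x - s) * (x - t)
        = 2 * mu * x ^ 2 - (2 * mu * s) * x - (2 * mu * t) * x + (2 * mu * t) * s := by
      ring
    rw [e1, h2mut]
    linear_combination x * hcrit + hDs
  set φ : ℝ → ℝ := fun x => lam * x + mu * x ^ 2 + c - Real.log x with hφ
  have hφ1 : φ 1 = 0 := by
    simp only [hφ, hc, Real.log_one, one_pow, mul_one]
    ring
  have hφs : φ s = 0 := by
    simp only [hφ]
    have hlogs : Real.log s = -L := by
      rw [hs, one_div, Real.log_inv, hL]
    rw [hlogs, hc, hlam, hmu, hs]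
    field_simp
    ring
  have hder : ∀ x : ℝ, 0 < x → HasDerivAt φ (2 * mu * (x - s) * (x - t) / x) x := by
    intro x hx
    have h : HasDerivAt φ (lam * 1 + mu * (2 * x ^ 1) + 0 - x⁻¹) x := by
      apply HasDerivAt.sub
      · apply HasDerivAt.add
        · exact ((hasDerivAt_id x).const_mul lam).add
            (((hasDerivAt_pow 2 x).const_mul mu).congr_deriv (by norm_num))
        · exact hasDerivAt_const x c
      · exact Real.hasDerivAt_log hx.ne'
    have e : lam * 1 + mu * (2 * x ^ 1) + 0 - x⁻¹ = 2 * mu * (x - s) * (x - t) / x := by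
      rw [← hfact x]
      field_simp
      ring
    rw [e] at h
    exact h
  have hcont : ∀ x : ℝ, 0 < x → ContinuousWithinAt φ (Set.Ioc 0 s) x := by
    intro x hx
    exact (hder x hx).continuousAt.continuousWithinAt
  have hmono1 : StrictAntiOn φ (Set.Ioc 0 s) := by
    apply strictAntiOn_of_deriv_neg (convex_Ioc 0 s)
    · intro x hx
      exact (hder x hx.1).continuousAt.continuousWithinAt
    · intro x hx
      rw [interior_Ioc] at hx
      obtain ⟨hx1, hx2⟩ := hx
      rw [(hder x hx1).deriv]
      apply div_neg_of_neg_of_pos _ hx1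
      have h1 : 0 < (x - s) * (x - t) :=
        mul_pos_of_neg_of_neg (by linarith) (by linarith)
      nlinarith
  have hmono2 : StrictMonoOn φ (Set.Icc s t) := by
    apply strictMonoOn_of_deriv_pos (convex_Icc s t)
    · intro x hx
      exact (hder x (lt_of_lt_of_le hs0 hx.1)).continuousAt.continuousWithinAt
    · intro x hx
      rw [interior_Icc] at hx
      obtain ⟨hx1, hx2⟩ := hx
      have hx0 : 0 < x := lt_trans hs0 hx1
      rw [(hder x hx0).deriv]
      apply div_pos _ hx0
      have h1 : (x - s) * (x - t) < 0 :=
        mul_neg_of_pos_of_neg (by linarith) (by linarith)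
      nlinarith
  have hmono3 : StrictAntiOn φ (Set.Icc t 1) := by
    apply strictAntiOn_of_deriv_neg (convex_Icc t 1)
    · intro x hx
      exact (hder x (lt_of_lt_of_le ht0 hx.1)).continuousAt.continuousWithinAt
    · intro x hx
      rw [interior_Icc] at hx
      obtain ⟨hx1, hx2⟩ := hx
      have hx0 : 0 < x := lt_trans ht0 hx1
      rw [(hder x hx0).deriv]
      apply div_neg_of_neg_of_pos _ hx0
      have h1 : 0 < (x - s) * (x - t) :=
        mul_pos (by linarith) (by linarith)
      nlinarith
  have hφpos : ∀ x : ℝ, 0 < x → x ≤ 1 → x ≠ s → x ≠ 1 → 0 < φ x := by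
    intro x hx hx1 hxs hx1'
    rcases lt_or_gt_of_ne hxs with h | h
    · have := hmono1 ⟨hx, h.le⟩ ⟨hs0, le_refl s⟩ h
      rw [hφs] at this
      exact this
    · by_cases hxt : x ≤ t
      · have := hmono2 ⟨le_refl s, hst.le⟩ ⟨h.le, hxt⟩ h
        rw [hφs] at this
        exact this
      · push_neg at hxt
        have hlt1 : x < 1 := lt_of_le_of_ne hx1 hx1'
        have := hmono3 ⟨hxt.le, hx1⟩ ⟨ht1, le_refl 1⟩ hlt1
        rw [hφ1] at this
        exact this
  have hφnonneg : ∀ x : ℝ, 0 < x → x ≤ 1 → 0 ≤ φ x := by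
    intro x hx hx1
    by_cases h1 : x = s
    · rw [h1, hφs]
    by_cases h2 : x = 1
    · rw [h2, hφ1]
    exact (hφpos x hx hx1 h1 h2).le
  refine ⟨lam, mu, c, ?_, ?_, ?_⟩
  · rw [hc, hlam, hmu, hL]
    field_simp
    ring
  · intro x hx0 hx1
    rcases hx0.lt_or_eq with h | h
    · have hnn := hφnonneg x h hx1
      simp only [hφ] at hnn
      calc x = Real.exp (Real.log x) := (Real.exp_log h).symm
        _ ≤ Real.exp (lam * x + mu * x ^ 2 + c) := Real.exp_le_exp.mpr (by linarith)
    · rw [← h]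
      exact (Real.exp_pos _).le
  · intro x hx0 hx1 hxs hxne
    rcases hx0.lt_or_eq with h | h
    · have hpos := hφpos x h hx1 hxs hxne
      simp only [hφ] at hpos
      calc x = Real.exp (Real.log x) := (Real.exp_log h).symm
        _ < Real.exp (lam * x + mu * x ^ 2 + c) := Real.exp_lt_exp.mpr (by linarith)
    · rw [← h]
      exact Real.exp_pos _

set_option maxHeartbeats 1000000 in
theorem stmt14 (d : ℕ) (hd : 1 ≤ d)
    (p : Fin (d ^ 2) → ℝ) (hp0 : ∀ j, 0 ≤ p j) (hp1 : ∀ j, p j ≤ 1)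
    (hsum : ∑ j, p j = d) (hsq : ∑ j, p j ^ 2 = 2 * d / (d + 1)) :
    ∏ j, p j ≤ (1 / ((d : ℝ) + 1)) ^ (d ^ 2 - 1) ∧
      (∏ j, p j = (1 / ((d : ℝ) + 1)) ^ (d ^ 2 - 1) ↔
        ∃ j₀, p j₀ = 1 ∧ ∀ j, j ≠ j₀ → p j = 1 / ((d : ℝ) + 1)) := by
  classical
  have hd2 : 1 ≤ d ^ 2 := Nat.one_le_pow 2 d (by omega)
  set D : ℝ := (d : ℝ) with hD
  have hD1 : (1:ℝ) ≤ D := by rw [hD]; exact_mod_cast hd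
  have hD0 : (0:ℝ) < D := by linarith
  have hDp1 : (0:ℝ) < D + 1 := by linarith
  obtain ⟨lam, mu, c, hid, hle, hlt⟩ := key_exists D hD1
  set s : ℝ := 1 / (D + 1) with hs
  have hspos : 0 < s := by rw [hs]; positivity
  have hs1 : s < 1 := by rw [hs, div_lt_one hDp1]; linarith
  have hncast : ((d ^ 2 : ℕ) : ℝ) = D ^ 2 := by rw [hD]; push_cast; ring
  have hnm : ((d ^ 2 - 1 : ℕ) : ℝ) = D ^ 2 - 1 := by
    rw [Nat.cast_sub hd2, hncast]
    norm_num
  have hsexp : Real.exp (-Real.log (D + 1)) = s := by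
    rw [Real.exp_neg, Real.exp_log hDp1, hs, one_div]
  have hbound : Real.exp (lam * D + mu * (2 * D / (D + 1)) + c * D ^ 2) = s ^ (d ^ 2 - 1) := by
    rw [hid]
    have e : -(D ^ 2 - 1) * Real.log (D + 1)
        = ((d ^ 2 - 1 : ℕ) : ℝ) * (-Real.log (D + 1)) := by rw [hnm]; ring
    rw [e, Real.exp_nat_mul, hsexp]
  have hsum_exp : ∑ j, (lam * p j + mu * p j ^ 2 + c)
      = lam * D + mu * (2 * D / (D + 1)) + c * D ^ 2 := by
    rw [Finset.sum_add_distrib, Finset.sum_add_distrib, ← Finset.mul_sum, ← Finset.mul_sum,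
      hsum, hsq, Finset.sum_const, Finset.card_univ, Fintype.card_fin, nsmul_eq_mul, hncast]
    ring
  have hexp_prod : ∏ j, Real.exp (lam * p j + mu * p j ^ 2 + c) = s ^ (d ^ 2 - 1) := by
    rw [← Real.exp_sum, hsum_exp, hbound]
  have hprodle : ∏ j, p j ≤ s ^ (d ^ 2 - 1) := by
    calc ∏ j, p j ≤ ∏ j, Real.exp (lam * p j + mu * p j ^ 2 + c) :=
          Finset.prod_le_prod (fun j _ => hp0 j) (fun j _ => hle (p j) (hp0 j) (hp1 j))
      _ = s ^ (d ^ 2 - 1) := hexp_prod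
  refine ⟨hprodle, ?_, ?_⟩
  · -- forward direction of iff
    intro hEq
    have hppos : ∀ j, 0 < p j := by
      intro j
      rcases (hp0 j).lt_or_eq with h | h
      · exact h
      · exfalso
        have hz : ∏ j, p j = 0 := Finset.prod_eq_zero (Finset.mem_univ j) h.symm
        rw [hEq] at hz
        exact (pow_pos hspos _).ne' hz
    have hmem : ∀ j, p j = s ∨ p j = 1 := by
      intro j
      by_contra hcon
      push_neg at hcon
      have hstrict : ∏ i, p i < ∏ i, Real.exp (lam * p i + mu * p i ^ 2 + c) :=
        Finset.prod_lt_prod (fun i _ => hppos i)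
          (fun i _ => hle (p i) (hp0 i) (hp1 i))
          ⟨j, Finset.mem_univ j, hlt (p j) (hp0 j) (hp1 j) hcon.1 hcon.2⟩
      rw [hexp_prod, hEq] at hstrict
      exact lt_irrefl _ hstrict
    set T := Finset.univ.filter (fun j : Fin (d ^ 2) => p j = 1) with hT
    set T' := Finset.univ.filter (fun j : Fin (d ^ 2) => ¬ p j = 1) with hT'
    have hsplit : (T.card : ℝ) + (T'.card : ℝ) * s = D := by
      have h1 : ∑ j ∈ T, p j = (T.card : ℝ) := by
        rw [Finset.sum_congr rfl (fun j hj => (Finset.mem_filter.mp hj).2),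
          Finset.sum_const, nsmul_eq_mul, mul_one]
      have h2 : ∑ j ∈ T', p j = (T'.card : ℝ) * s := by
        rw [Finset.sum_congr rfl (fun j hj => ?_), Finset.sum_const, nsmul_eq_mul]
        rcases hmem j with h | h
        · exact h
        · exact absurd h (Finset.mem_filter.mp hj).2
      have h3 : ∑ j ∈ T, p j + ∑ j ∈ T', p j = D := by
        rw [Finset.sum_filter_add_sum_filter_not]
        exact hsum
      rw [h1, h2] at h3
      exact h3
    have hcards : T.card + T'.card = d ^ 2 := by
      rw [hT, hT', Finset.card_filter_add_card_filter_not, Finset.card_univ,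
        Fintype.card_fin]
    have hkk : (T.card : ℝ) + (T'.card : ℝ) = D ^ 2 := by
      rw [← hncast]
      exact_mod_cast hcards
    have hsid : s * (D + 1) = 1 := by rw [hs]; field_simp
    have hkD : (T.card : ℝ) * D = D := by
      linear_combination (D + 1) * hsplit - (T'.card : ℝ) * hsid - hkk
    have hk1 : (T.card : ℝ) = 1 := by
      have := mul_right_cancel₀ hD0.ne' (hkD.trans (one_mul D).symm)
      exact this
    have hkcard : T.card = 1 := by exact_mod_cast hk1
    obtain ⟨j₀, hj₀⟩ := Finset.card_eq_one.mp hkcard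
    refine ⟨j₀, ?_, ?_⟩
    · have hmem0 : j₀ ∈ T := by rw [hj₀]; exact Finset.mem_singleton_self j₀
      exact (Finset.mem_filter.mp hmem0).2
    · intro j hj
      rcases hmem j with h | h
      · exact h
      · exfalso
        have : j ∈ T := Finset.mem_filter.mpr ⟨Finset.mem_univ j, h⟩
        rw [hj₀, Finset.mem_singleton] at this
        exact hj this
  · -- backward direction
    rintro ⟨j₀, h1, hrest⟩
    rw [← Finset.mul_prod_erase Finset.univ p (Finset.mem_univ j₀), h1, one_mul]
    rw [Finset.prod_congr rfl (fun j hj => hrest j (Finset.ne_of_mem_erase hj))]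
    rw [Finset.prod_const, Finset.card_erase_of_mem (Finset.mem_univ j₀), Finset.card_univ,
      Fintype.card_fin]
end
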